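/- arXiv:1505.00290 — 6 statements merged into one kernel-verified Lean document; each statement's English description precedes it below -/
import Mathlib

section
/- Let (V, dist) be a finite metric space, T ⊆ V nonempty, v₀ : T → ℝ with Lipschitz constant α ≥ 0 on T. Then the function v = (vLow + vHigh)/2 is an α-Lipschitz extension of v₀ which minimizes, over all α-Lipschitz extensions w, the quantity max over α-Lipschitz extensions u of ‖w − u‖_∞. -/
/-- `(vLow + vHigh)/2` is an `α`-Lipschitz extension of `v₀` minimizing the maximum
`ℓ_∞` distance to all `α`-Lipschitz extensions. -/
theorem midpoint_extension_minimax {V : Type*} [MetricSpace V] [Fintype V]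
    (T : Set V) (hT : T.Nonempty) (v₀ : T → ℝ) (α : ℝ) (hα : 0 ≤ α)
    (hLip : ∀ s t : T, |v₀ s - v₀ t| ≤ α * dist (s : V) (t : V)) :
    let vLow : V → ℝ := fun x => sInf (Set.range fun t : T => v₀ t + α * dist x (t : V))
    let vHigh : V → ℝ := fun x => sSup (Set.range fun t : T => v₀ t - α * dist (t : V) x)
    let Lip : Set (V → ℝ) :=
      {w | (∀ t : T, w t = v₀ t) ∧ ∀ x y : V, |w x - w y| ≤ α * dist x y}
    let dev : (V → ℝ) → ℝ := fun w =>
      sSup {r | ∃ u ∈ Lip, r = sSup (Set.range fun x : V => |w x - u x|)}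
    let v : V → ℝ := fun x => (vLow x + vHigh x) / 2
    v ∈ Lip ∧ ∀ w ∈ Lip, dev v ≤ dev w := by
  intro vLow vHigh Lip dev v
  haveI : Nonempty T := hT.to_subtype
  haveI : Nonempty V := ⟨hT.choose⟩
  have hLow_le : ∀ (x : V) (t : T), vLow x ≤ v₀ t + α * dist x (t : V) :=
    fun x t => csInf_le (Set.finite_range _).bddBelow ⟨t, rfl⟩
  have hle_High : ∀ (x : V) (t : T), v₀ t - α * dist (t : V) x ≤ vHigh x :=
    fun x t => le_csSup (Set.finite_range _).bddAbove ⟨t, rfl⟩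
  have hle_Low : ∀ (x : V) (c : ℝ), (∀ t : T, c ≤ v₀ t + α * dist x (t : V)) → c ≤ vLow x :=
    fun x c h => le_csInf (Set.range_nonempty _) (by rintro r ⟨t, rfl⟩; exact h t)
  have hHigh_le : ∀ (x : V) (c : ℝ), (∀ t : T, v₀ t - α * dist (t : V) x ≤ c) → vHigh x ≤ c :=
    fun x c h => csSup_le (Set.range_nonempty _) (by rintro r ⟨t, rfl⟩; exact h t)
  -- values on T
  have hLowT : ∀ t : T, vLow (t : V) = v₀ t := by
    intro t
    refine le_antisymm ?_ ?_
    · have := hLow_le (t : V) t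
      simpa using this
    · refine hle_Low _ _ fun s => ?_
      have h1 := hLip t s
      have h2 : v₀ t - v₀ s ≤ |v₀ t - v₀ s| := le_abs_self _
      linarith
  have hHighT : ∀ t : T, vHigh (t : V) = v₀ t := by
    intro t
    refine le_antisymm ?_ ?_
    · refine hHigh_le _ _ fun s => ?_
      have h1 := hLip s t
      have h2 : v₀ s - v₀ t ≤ |v₀ s - v₀ t| := le_abs_self _
      linarith
    · have := hle_High (t : V) t
      simpa using this
  -- one-sided Lipschitz bounds
  have hLowLip : ∀ x y : V, vLow x ≤ vLow y + α * dist x y := by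
    intro x y
    have : vLow x - α * dist x y ≤ vLow y := by
      refine hle_Low _ _ fun t => ?_
      have h1 := hLow_le x t
      have h2 := mul_le_mul_of_nonneg_left (dist_triangle x y (t : V)) hα
      linarith [h2]
    linarith
  have hHighLip : ∀ x y : V, vHigh x ≤ vHigh y + α * dist x y := by
    intro x y
    refine hHigh_le _ _ fun t => ?_
    have h1 := hle_High y t
    have h2 := mul_le_mul_of_nonneg_left (dist_triangle (t : V) x y) hα
    have h3 : dist x y = dist y x := dist_comm x y
    linarith
  have hLowMem : vLow ∈ Lip := by
    refine ⟨hLowT, fun x y => abs_sub_le_iff.mpr ⟨by linarith [hLowLip x y], ?_⟩⟩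
    have := hLowLip y x
    rw [dist_comm y x] at this
    linarith
  have hHighMem : vHigh ∈ Lip := by
    refine ⟨hHighT, fun x y => abs_sub_le_iff.mpr ⟨by linarith [hHighLip x y], ?_⟩⟩
    have := hHighLip y x
    rw [dist_comm y x] at this
    linarith
  -- sandwich
  have hsand : ∀ w ∈ Lip, ∀ x : V, vHigh x ≤ w x ∧ w x ≤ vLow x := by
    rintro w ⟨hwT, hwL⟩ x
    constructor
    · refine hHigh_le _ _ fun t => ?_
      have h2 := (le_abs_self (w (t : V) - w x)).trans (hwL (t : V) x)
      rw [hwT t] at h2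
      linarith
    · refine hle_Low _ _ fun t => ?_
      have h2 := (le_abs_self (w x - w (t : V))).trans (hwL x (t : V))
      rw [hwT t] at h2
      linarith
  have hHL : ∀ x : V, vHigh x ≤ vLow x := fun x => le_trans (hsand vLow hLowMem x).1 (hsand vLow hLowMem x).2
  have hv : ∀ x : V, v x = (vLow x + vHigh x) / 2 := fun _ => rfl
  have hvMem : v ∈ Lip := by
    constructor
    · intro t
      rw [hv, hLowT, hHighT]; ring
    · intro x y
      rw [hv, hv]
      have h1 := hLowLip x y
      have h2 := hLowLip y x
      have h3 := hHighLip x y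
      have h4 := hHighLip y x
      rw [dist_comm y x] at h2 h4
      refine abs_sub_le_iff.mpr ⟨by linarith, by linarith⟩
  -- optimal value
  set D : ℝ := sSup (Set.range fun x : V => vLow x - vHigh x) with hDdef
  have hD_ge : ∀ x : V, vLow x - vHigh x ≤ D :=
    fun x => le_csSup (Set.finite_range _).bddAbove ⟨x, rfl⟩
  have hD0 : 0 ≤ D := le_trans (by linarith [hHL (Classical.arbitrary V)]) (hD_ge (Classical.arbitrary V))
  have hDmem : ∃ x : V, vLow x - vHigh x = D := by
    have : D ∈ Set.range fun x : V => vLow x - vHigh x :=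
      (Set.range_nonempty _).csSup_mem (Set.finite_range _)
    obtain ⟨x, hx⟩ := this
    exact ⟨x, hx⟩
  have hbound : ∀ w ∈ Lip, ∀ u ∈ Lip, ∀ x : V, |w x - u x| ≤ vLow x - vHigh x := by
    intro w hw u hu x
    obtain ⟨h1, h2⟩ := hsand w hw x
    obtain ⟨h3, h4⟩ := hsand u hu x
    exact abs_sub_le_iff.mpr ⟨by linarith, by linarith⟩
  have hbddS : ∀ w ∈ Lip,
      ∀ r ∈ {r | ∃ u ∈ Lip, r = sSup (Set.range fun x : V => |w x - u x|)}, r ≤ D := by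
    rintro w hw r ⟨u, hu, rfl⟩
    refine Real.sSup_le ?_ hD0
    rintro s ⟨x, rfl⟩
    exact (hbound w hw u hu x).trans (hD_ge x)
  refine ⟨hvMem, fun w hw => ?_⟩
  have hdev_v : dev v ≤ D / 2 := by
    refine Real.sSup_le ?_ (by linarith)
    rintro r ⟨u, hu, rfl⟩
    refine Real.sSup_le ?_ (by linarith)
    rintro s ⟨x, rfl⟩
    obtain ⟨h3, h4⟩ := hsand u hu x
    have h5 := hHL x
    have h6 := hD_ge x
    show |v x - u x| ≤ D / 2
    rw [hv]
    exact abs_sub_le_iff.mpr ⟨by linarith, by linarith⟩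
  have hdev_w : D / 2 ≤ dev w := by
    obtain ⟨x, hx⟩ := hDmem
    have hmem : ∀ u ∈ Lip, (sSup (Set.range fun y : V => |w y - u y|)) ∈
        {r | ∃ u ∈ Lip, r = sSup (Set.range fun y : V => |w y - u y|)} :=
      fun u hu => ⟨u, hu, rfl⟩
    have hbdd : BddAbove {r | ∃ u ∈ Lip, r = sSup (Set.range fun y : V => |w y - u y|)} :=
      ⟨D, fun r hr => hbddS w hw r hr⟩
    by_cases h : D / 2 ≤ vLow x - w x
    · have h1 : D / 2 ≤ |w x - vLow x| := by
        rw [abs_sub_comm]; exact h.trans (le_abs_self _)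
      have h2 : |w x - vLow x| ≤ sSup (Set.range fun y : V => |w y - vLow y|) :=
        le_csSup (Set.finite_range _).bddAbove ⟨x, rfl⟩
      exact (h1.trans h2).trans (le_csSup hbdd (hmem vLow hLowMem))
    · have h0 : D / 2 ≤ w x - vHigh x := by linarith
      have h1 : D / 2 ≤ |w x - vHigh x| := h0.trans (le_abs_self _)
      have h2 : |w x - vHigh x| ≤ sSup (Set.range fun y : V => |w y - vHigh y|) :=
        le_csSup (Set.finite_range _).bddAbove ⟨x, rfl⟩
      exact (h1.trans h2).trans (le_csSup hbdd (hmem vHigh hHighMem))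
  linarith
end

section
/- Let G = (V, E, ℓ) be a finite connected weighted undirected graph with positive edge lengths, T ⊆ V nonempty, and v₀ : T → ℝ. Among all extensions v : V → ℝ of v₀, the minimum possible value of max over edges (x,y) of |v(x) − v(y)|/ℓ(x,y) equals the maximum over pairs of terminals s, t ∈ T of |v₀(s) − v₀(t)|/dist(s,t), where dist is the shortest-path metric induced by ℓ. -/
/-- Total length of a walk in a graph with edge lengths `ℓ`. -/
noncomputable def walkLen {V : Type*} (ℓ : Sym2 V → ℝ) {G : SimpleGraph V} {u v : V}
    (p : G.Walk u v) : ℝ :=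
  (p.darts.map fun d => ℓ d.edge).sum

/-- Shortest-path distance induced by edge lengths `ℓ`. -/
noncomputable def gdist {V : Type*} (G : SimpleGraph V) (ℓ : Sym2 V → ℝ) (u v : V) : ℝ :=
  sInf {x | ∃ p : G.Walk u v, walkLen ℓ p = x}

/-- Absolute gradient `|v x - v y| / ℓ(x,y)` of `v` on the unordered pair `e`. -/
noncomputable def absGrad {V : Type*} (ℓ : Sym2 V → ℝ) (v : V → ℝ) (e : Sym2 V) : ℝ :=
  Sym2.lift ⟨fun x y => |v x - v y|, fun x y => abs_sub_comm (v x) (v y)⟩ e / ℓ e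

/-- The absolute edge gradients of `v`, sorted in decreasing order. -/
noncomputable def gradList {V : Type*} [Fintype V] [DecidableEq V] (G : SimpleGraph V)
    [DecidableRel G.Adj] (ℓ : Sym2 V → ℝ) (v : V → ℝ) : List ℝ :=
  (G.edgeFinset.val.map (absGrad ℓ v)).sort (· ≥ ·)

section Aux
variable {V : Type*} {G : SimpleGraph V} {ℓ : Sym2 V → ℝ}

lemma walkLen_nil {u : V} : walkLen ℓ (SimpleGraph.Walk.nil : G.Walk u u) = 0 := by
  simp [walkLen]

lemma walkLen_cons {u w x : V} (h : G.Adj u w) (p : G.Walk w x) :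
    walkLen ℓ (SimpleGraph.Walk.cons h p) = ℓ s(u, w) + walkLen ℓ p := by
  simp [walkLen]

lemma walkLen_nonneg (hℓ : ∀ e ∈ G.edgeSet, 0 < ℓ e) {u w : V} (p : G.Walk u w) :
    0 ≤ walkLen ℓ p := by
  apply List.sum_nonneg
  intro x hx
  simp only [List.mem_map] at hx
  obtain ⟨d, hd, rfl⟩ := hx
  exact (hℓ d.edge d.edge_mem).le

lemma gdist_nonneg (hℓ : ∀ e ∈ G.edgeSet, 0 < ℓ e) (u w : V) : 0 ≤ gdist G ℓ u w := by
  apply Real.sInf_nonneg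
  rintro x ⟨p, rfl⟩
  exact walkLen_nonneg hℓ p

lemma gdist_le_walkLen (hℓ : ∀ e ∈ G.edgeSet, 0 < ℓ e) {u w : V} (p : G.Walk u w) :
    gdist G ℓ u w ≤ walkLen ℓ p :=
  csInf_le ⟨0, by rintro x ⟨q, rfl⟩; exact walkLen_nonneg hℓ q⟩ ⟨p, rfl⟩

lemma gdist_self (hℓ : ∀ e ∈ G.edgeSet, 0 < ℓ e) (u : V) : gdist G ℓ u u = 0 :=
  le_antisymm (by simpa [walkLen_nil] using gdist_le_walkLen hℓ (.nil : G.Walk u u))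
    (gdist_nonneg hℓ u u)

lemma walkLen_reverse {u w : V} (p : G.Walk u w) : walkLen ℓ p.reverse = walkLen ℓ p := by
  simp [walkLen, SimpleGraph.Walk.darts_reverse, List.map_reverse, List.sum_reverse,
    Function.comp_def, SimpleGraph.Dart.edge_symm]

lemma gdist_symm (u w : V) : gdist G ℓ u w = gdist G ℓ w u := by
  unfold gdist
  congr 1
  ext x
  constructor
  · rintro ⟨p, rfl⟩; exact ⟨p.reverse, walkLen_reverse p⟩
  · rintro ⟨p, rfl⟩; exact ⟨p.reverse, walkLen_reverse p⟩

lemma walkLen_append {u w x : V} (p : G.Walk u w) (q : G.Walk w x) :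
    walkLen ℓ (p.append q) = walkLen ℓ p + walkLen ℓ q := by
  simp [walkLen, SimpleGraph.Walk.darts_append]

lemma gdist_triangle (hG : G.Connected) (hℓ : ∀ e ∈ G.edgeSet, 0 < ℓ e) (x y z : V) :
    gdist G ℓ x z ≤ gdist G ℓ x y + gdist G ℓ y z := by
  apply le_of_forall_pos_le_add
  intro ε hε
  obtain ⟨w1, ⟨p, rfl⟩, hplt⟩ := Real.lt_sInf_add_pos
    (s := {a | ∃ p : G.Walk x y, walkLen ℓ p = a})
    (by obtain ⟨p⟩ := hG.preconnected x y; exact ⟨_, p, rfl⟩) (half_pos hε)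
  obtain ⟨w2, ⟨q, rfl⟩, hqlt⟩ := Real.lt_sInf_add_pos
    (s := {a | ∃ q : G.Walk y z, walkLen ℓ q = a})
    (by obtain ⟨q⟩ := hG.preconnected y z; exact ⟨_, q, rfl⟩) (half_pos hε)
  calc gdist G ℓ x z ≤ walkLen ℓ (p.append q) := gdist_le_walkLen hℓ _
    _ = walkLen ℓ p + walkLen ℓ q := walkLen_append p q
    _ ≤ (gdist G ℓ x y + ε / 2) + (gdist G ℓ y z + ε / 2) := add_le_add hplt.le hqlt.le
    _ = gdist G ℓ x y + gdist G ℓ y z + ε := by ring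

lemma gdist_adj (hℓ : ∀ e ∈ G.edgeSet, 0 < ℓ e) {x y : V} (h : G.Adj x y) :
    gdist G ℓ x y ≤ ℓ s(x, y) := by
  have := gdist_le_walkLen hℓ (SimpleGraph.Walk.cons h SimpleGraph.Walk.nil)
  simpa [walkLen_cons, walkLen_nil] using this

lemma gdist_pos [Fintype V] (hG : G.Connected) (hℓ : ∀ e ∈ G.edgeSet, 0 < ℓ e)
    {s t : V} (hst : s ≠ t) : 0 < gdist G ℓ s t := by
  classical
  have hfin : G.edgeSet.Finite := Set.toFinite _
  obtain ⟨p⟩ := hG.preconnected s t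
  have hne : G.edgeSet.Nonempty := by
    cases p with
    | nil => exact absurd rfl hst
    | cons h q => exact ⟨_, (SimpleGraph.mem_edgeSet G).2 h⟩
  set m := sInf (ℓ '' G.edgeSet) with hm
  have hmmem : m ∈ ℓ '' G.edgeSet := (hne.image ℓ).csInf_mem (hfin.image ℓ)
  have hmpos : 0 < m := by
    obtain ⟨e, he, hee⟩ := hmmem
    rw [← hee]; exact hℓ e he
  have hmle : ∀ e ∈ G.edgeSet, m ≤ ℓ e := fun e he =>
    csInf_le (hfin.image ℓ).bddBelow ⟨e, he, rfl⟩
  have key : ∀ {u w : V} (q : G.Walk u w), u ≠ w → m ≤ walkLen ℓ q := by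
    intro u w q huw
    cases q with
    | nil => exact absurd rfl huw
    | cons h q' =>
      rw [walkLen_cons]
      have h1 := hmle _ ((SimpleGraph.mem_edgeSet G).2 h)
      have h2 := walkLen_nonneg hℓ q'
      linarith
  refine lt_of_lt_of_le hmpos (le_csInf ⟨_, p, rfl⟩ ?_)
  rintro x ⟨q, rfl⟩
  exact key q hst

lemma abs_sub_le_walkLen (hℓ : ∀ e ∈ G.edgeSet, 0 < ℓ e) (v : V → ℝ) (M : ℝ)
    (hM : ∀ ⦃x y : V⦄, G.Adj x y → |v x - v y| ≤ M * ℓ s(x, y)) {u w : V} (p : G.Walk u w) :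
    |v u - v w| ≤ M * walkLen ℓ p := by
  induction p with
  | nil => simp [walkLen_nil]
  | @cons a b c h q ih =>
    rw [walkLen_cons, mul_add]
    calc |v a - v c| ≤ |v a - v b| + |v b - v c| := abs_sub_le _ _ _
      _ ≤ M * ℓ s(a, b) + M * walkLen ℓ q := add_le_add (hM h) ih

end Aux

/-- The minimum over extensions of the maximum edge gradient equals the maximum
gradient between pairs of distinct terminals in the shortest-path metric. -/
theorem inf_min_duality {V : Type*} [Fintype V] (G : SimpleGraph V) (hG : G.Connected)
    (ℓ : Sym2 V → ℝ) (hℓ : ∀ e ∈ G.edgeSet, 0 < ℓ e)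
    (T : Set V) (hT : T.Nonempty) (v₀ : V → ℝ) :
    IsLeast
      {a : ℝ | ∃ v : V → ℝ, (∀ t ∈ T, v t = v₀ t) ∧
          a = sSup {g : ℝ | ∃ e ∈ G.edgeSet, g = absGrad ℓ v e}}
      (sSup {g : ℝ | ∃ s ∈ T, ∃ t ∈ T, s ≠ t ∧ g = |v₀ s - v₀ t| / gdist G ℓ s t}) := by
  classical
  set SL : Set ℝ := {g : ℝ | ∃ s ∈ T, ∃ t ∈ T, s ≠ t ∧ g = |v₀ s - v₀ t| / gdist G ℓ s t}
    with hSL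
  set L : ℝ := sSup SL with hLdef
  -- finiteness facts
  have hSLfin : SL.Finite := by
    apply Set.Finite.subset
      (Set.finite_univ.image (fun p : V × V => |v₀ p.1 - v₀ p.2| / gdist G ℓ p.1 p.2))
    rintro g ⟨s, hs, t, ht, hst, rfl⟩
    exact ⟨(s, t), trivial, rfl⟩
  have hSLbdd : BddAbove SL := hSLfin.bddAbove
  have hL0 : 0 ≤ L := by
    apply Real.sSup_nonneg
    rintro g ⟨s, hs, t, ht, hst, rfl⟩
    exact div_nonneg (abs_nonneg _) (gdist_nonneg hℓ s t)
  have hLub : ∀ s ∈ T, ∀ t ∈ T, s ≠ t → |v₀ s - v₀ t| ≤ L * gdist G ℓ s t := by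
    intro s hs t ht hst
    have h1 : |v₀ s - v₀ t| / gdist G ℓ s t ≤ L := le_csSup hSLbdd ⟨s, hs, t, ht, hst, rfl⟩
    rwa [div_le_iff₀ (gdist_pos hG hℓ hst)] at h1
  -- the edge-gradient set of an arbitrary v
  have hSvfin : ∀ v : V → ℝ, {g : ℝ | ∃ e ∈ G.edgeSet, g = absGrad ℓ v e}.Finite := by
    intro v
    apply Set.Finite.subset ((Set.toFinite G.edgeSet).image (absGrad ℓ v))
    rintro g ⟨e, he, rfl⟩
    exact ⟨e, he, rfl⟩
  have habsGrad : ∀ (v : V → ℝ) (x y : V), absGrad ℓ v s(x, y) = |v x - v y| / ℓ s(x, y) := by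
    intro v x y; simp [absGrad]
  -- lower-bound part
  have hlow : ∀ a ∈ {a : ℝ | ∃ v : V → ℝ, (∀ t ∈ T, v t = v₀ t) ∧
      a = sSup {g : ℝ | ∃ e ∈ G.edgeSet, g = absGrad ℓ v e}}, L ≤ a := by
    rintro a ⟨v, hv, rfl⟩
    set M := sSup {g : ℝ | ∃ e ∈ G.edgeSet, g = absGrad ℓ v e} with hM
    have hM0 : 0 ≤ M := by
      apply Real.sSup_nonneg
      rintro g ⟨e, he, rfl⟩
      induction e with
      | h x y => rw [habsGrad]; exact div_nonneg (abs_nonneg _) (hℓ _ he).le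
    have hedge : ∀ ⦃x y : V⦄, G.Adj x y → |v x - v y| ≤ M * ℓ s(x, y) := by
      intro x y h
      have h1 : absGrad ℓ v s(x, y) ≤ M :=
        le_csSup (hSvfin v).bddAbove ⟨s(x, y), h, rfl⟩
      rw [habsGrad, div_le_iff₀ (hℓ _ ((SimpleGraph.mem_edgeSet G).2 h))] at h1
      exact h1
    apply Real.sSup_le _ hM0
    rintro g ⟨s, hs, t, ht, hst, rfl⟩
    rw [div_le_iff₀ (gdist_pos hG hℓ hst), ← hv s hs, ← hv t ht]
    apply le_of_forall_pos_le_add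
    intro ε hε
    have hM1 : (0 : ℝ) < M + 1 := by linarith
    obtain ⟨w, ⟨p, rfl⟩, hlt⟩ := Real.lt_sInf_add_pos
      (s := {a | ∃ p : G.Walk s t, walkLen ℓ p = a})
      (by obtain ⟨p⟩ := hG.preconnected s t; exact ⟨_, p, rfl⟩) (div_pos hε hM1)
    calc |v s - v t| ≤ M * walkLen ℓ p := abs_sub_le_walkLen hℓ v M hedge p
      _ ≤ M * (gdist G ℓ s t + ε / (M + 1)) := mul_le_mul_of_nonneg_left hlt.le hM0
      _ = M * gdist G ℓ s t + M * (ε / (M + 1)) := mul_add _ _ _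
      _ ≤ M * gdist G ℓ s t + ε := by
          have : M * (ε / (M + 1)) ≤ ε := by
            rw [mul_div_assoc', div_le_iff₀ hM1]
            nlinarith
          linarith
  -- the extremal extension
  set v : V → ℝ := fun x => sSup ((fun s => v₀ s - L * gdist G ℓ s x) '' T) with hvdef
  have hvbdd : ∀ x : V, BddAbove ((fun s => v₀ s - L * gdist G ℓ s x) '' T) := fun x =>
    ((Set.toFinite T).image _).bddAbove
  have hvge : ∀ x : V, ∀ s ∈ T, v₀ s - L * gdist G ℓ s x ≤ v x := fun x s hs =>
    le_csSup (hvbdd x) ⟨s, hs, rfl⟩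
  have hvle : ∀ (x : V) (c : ℝ), (∀ s ∈ T, v₀ s - L * gdist G ℓ s x ≤ c) → v x ≤ c := by
    intro x c hc
    apply csSup_le (hT.image _)
    rintro y ⟨s, hs, rfl⟩
    exact hc s hs
  have hagree : ∀ t ∈ T, v t = v₀ t := by
    intro t ht
    refine le_antisymm (hvle t (v₀ t) ?_) ?_
    · intro s hs
      by_cases hst : s = t
      · subst hst; rw [gdist_self hℓ]; simp
      · have h1 := hLub s hs t ht hst
        have h2 : v₀ s - v₀ t ≤ |v₀ s - v₀ t| := le_abs_self _
        linarith
    · have := hvge t t ht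
      rwa [gdist_self hℓ, mul_zero, sub_zero] at this
  have hlip : ∀ x y : V, v x - v y ≤ L * gdist G ℓ x y := by
    intro x y
    have := hvle x (v y + L * gdist G ℓ x y) ?_
    · linarith
    intro s hs
    have h1 := hvge y s hs
    have h2 := gdist_triangle hG hℓ s x y
    have h3 : gdist G ℓ s y ≤ gdist G ℓ s x + gdist G ℓ x y := by
      have := gdist_triangle hG hℓ s x y
      exact this
    have h4 : L * gdist G ℓ s y ≤ L * (gdist G ℓ s x + gdist G ℓ x y) :=
      mul_le_mul_of_nonneg_left h3 hL0
    rw [mul_add] at h4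
    linarith
  have habs : ∀ x y : V, |v x - v y| ≤ L * gdist G ℓ x y := by
    intro x y
    rw [abs_sub_le_iff]
    refine ⟨hlip x y, ?_⟩
    rw [gdist_symm (G := G) (ℓ := ℓ) x y]
    exact hlip y x
  have hedgeL : ∀ g ∈ {g : ℝ | ∃ e ∈ G.edgeSet, g = absGrad ℓ v e}, g ≤ L := by
    rintro g ⟨e, he, rfl⟩
    induction e with
    | h x y =>
      have hadj : G.Adj x y := (SimpleGraph.mem_edgeSet G).1 he
      rw [habsGrad, div_le_iff₀ (hℓ _ he)]
      calc |v x - v y| ≤ L * gdist G ℓ x y := habs x y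
        _ ≤ L * ℓ s(x, y) := mul_le_mul_of_nonneg_left (gdist_adj hℓ hadj) hL0
  have hmem : L ∈ {a : ℝ | ∃ v : V → ℝ, (∀ t ∈ T, v t = v₀ t) ∧
      a = sSup {g : ℝ | ∃ e ∈ G.edgeSet, g = absGrad ℓ v e}} := by
    refine ⟨v, hagree, ?_⟩
    refine le_antisymm ?_ (Real.sSup_le hedgeL hL0)
    exact hlow _ ⟨v, hagree, rfl⟩
  exact ⟨hmem, hlow⟩
end

section
/- Let (G, v₀) be a well-posed instance on a finite connected weighted graph. If a complete voltage assignment v extends v₀ and satisfies the max-min gradient averaging property — for every non-terminal x, max over neighbors y of grad[v](x,y) equals minus the min over neighbors y of grad[v](x,y) — then v is the unique lex-minimizer of (G, v₀). -/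
/-!
Strong induction on a set `E` of edges containing every edge at a non-terminal. Let `M` be the
largest gradient of `v` on `E`. If `w` exceeds `M` somewhere on `E`, its sorted list is already
larger. Otherwise each edge of gradient `M` extends, by max-min averaging at its non-terminal
vertices, to a path between two terminals along which `v` descends at slope exactly `M` (the path
cannot cycle since `v` strictly decreases along it). Since `w` has slope at most `M` and the same
terminal values, it coincides with `v` on this path. So both sorted lists open with the same block
of `M`s, and we recurse after deleting these edges and declaring their endpoints terminals. If all
gradients on `E` vanish, connectivity forces `w = v`.
-/

open SimpleGraph

noncomputable def grad {V : Type*} (ℓ : Sym2 V → ℝ) (v : V → ℝ) (x y : V) : ℝ :=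
  (v x - v y) / ℓ s(x, y)

section Gradients

variable {V : Type*} {ℓ : Sym2 V → ℝ} {v w : V → ℝ} {x y : V}

theorem grad_swap : grad ℓ v y x = -grad ℓ v x y := by
  rw [grad, grad, Sym2.eq_swap, ← neg_div, neg_sub]

theorem abs_grad (hℓ : 0 < ℓ s(x, y)) : |grad ℓ v x y| = absGrad ℓ v s(x, y) := by
  rw [grad, abs_div, abs_of_pos hℓ]
  rfl

theorem abs_sub_le_of_absGrad_le {M : ℝ} (hℓ : 0 < ℓ s(x, y)) (h : absGrad ℓ v s(x, y) ≤ M) :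
    |v x - v y| ≤ M * ℓ s(x, y) :=
  (div_le_iff₀ hℓ).1 h

theorem absGrad_congr {e : Sym2 V} (h : ∀ x ∈ e, w x = v x) : absGrad ℓ w e = absGrad ℓ v e := by
  induction e using Sym2.ind with
  | h a b =>
    change |w a - w b| / _ = |v a - v b| / _
    rw [h a (Sym2.mem_mk_left a b), h b (Sym2.mem_mk_right a b)]

end Gradients

theorem Set.Finite.neg_mem_of_sSup_eq_neg_sInf {S : Set ℝ} (hS : S.Finite)
    (h : sSup S = -sInf S) {M c : ℝ} (hM : ∀ g ∈ S, |g| ≤ M) (hc : c ∈ S) (hcM : |c| = M) :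
    -c ∈ S := by
  have hne : S.Nonempty := ⟨c, hc⟩
  have hsup : sSup S ≤ M := csSup_le hne fun g hg => (le_abs_self g).trans (hM g hg)
  have hinf : -M ≤ sInf S := le_csInf hne fun g hg => neg_le_of_abs_le (hM g hg)
  rcases (abs_eq ((abs_nonneg c).trans_eq hcM)).1 hcM with rfl | rfl
  · have hinf_eq : sInf S = -c := by linarith [le_csSup hS.bddAbove hc]
    simpa [hinf_eq] using hne.csInf_mem hS
  · have hsup_eq : sSup S = M := by linarith [csInf_le hS.bddBelow hc]
    simpa [hsup_eq] using hne.csSup_mem hS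

section SortedLists

theorem sort_ge_replicate_add {M : ℝ} {m : Multiset ℝ} (hm : ∀ a ∈ m, a ≤ M) (k : ℕ) :
    (Multiset.replicate k M + m).sort (· ≥ ·) = List.replicate k M ++ m.sort (· ≥ ·) := by
  induction k with
  | zero => simp
  | succ k ih =>
    rw [Multiset.replicate_succ, Multiset.cons_add, Multiset.sort_cons, ih, List.replicate_succ,
      List.cons_append]
    intro b hb
    rcases Multiset.mem_add.1 hb with hb | hb
    · exact (Multiset.eq_of_mem_replicate hb).le
    · exact hm b hb

theorem sort_ge_map_eq_replicate_append {α : Type*} (E : Finset α) (f : α → ℝ) (p : α → Prop)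
    [DecidablePred p] {M : ℝ} (hp : ∀ e ∈ E, p e → f e = M) (hle : ∀ e ∈ E, f e ≤ M) :
    (E.val.map f).sort (· ≥ ·) =
      List.replicate (E.filter p).card M ++ ((E.filter (¬ p ·)).val.map f).sort (· ≥ ·) := by
  have hrep : (E.filter p).val.map f = Multiset.replicate (E.filter p).card M := by
    refine Multiset.eq_replicate.2 ⟨Multiset.card_map _ _, ?_⟩
    simp only [Multiset.mem_map, Finset.filter_val, Multiset.mem_filter, Finset.mem_val]
    rintro _ ⟨e, ⟨he, hpe⟩, rfl⟩
    exact hp e he hpe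
  rw [← sort_ge_replicate_add, ← hrep, ← Multiset.map_add, Finset.filter_val, Finset.filter_val,
    Multiset.filter_add_not]
  simp only [Multiset.mem_map, Finset.filter_val, Multiset.mem_filter, Finset.mem_val]
  rintro _ ⟨e, ⟨he, -⟩, rfl⟩
  exact hle e he

theorem lex_sort_ge_of_forall_lt {m m' : Multiset ℝ} {c : ℝ} (hm : ∀ a ∈ m, a < c) (hc : c ∈ m') :
    List.Lex (· < ·) (m.sort (· ≥ ·)) (m'.sort (· ≥ ·)) := by
  have hc' : c ∈ m'.sort (· ≥ ·) := (Multiset.mem_sort _).2 hc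
  obtain ⟨b, t, hbt⟩ := List.exists_cons_of_ne_nil (List.ne_nil_of_mem hc')
  have hcb : c ≤ b := by
    have hsorted := Multiset.pairwise_sort m' (· ≥ ·)
    rw [hbt] at hsorted hc'
    rcases List.mem_cons.1 hc' with rfl | hct
    · exact le_rfl
    · exact List.rel_of_pairwise_cons hsorted hct
  rw [hbt]
  cases hsm : m.sort (· ≥ ·) with
  | nil => exact List.Lex.nil
  | cons a _ =>
    have ha : a ∈ m := (Multiset.mem_sort (· ≥ ·)).1 (hsm ▸ List.mem_cons_self)
    exact List.Lex.rel ((hm a ha).trans_le hcb)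

end SortedLists

namespace SimpleGraph

variable {V : Type*} {G : SimpleGraph V}

namespace Walk

variable {f g : V → ℝ}

theorem sub_le_sub_of_forall_dart {s t : V} (p : G.Walk s t)
    (h : ∀ d ∈ p.darts, f d.fst - f d.snd ≤ g d.fst - g d.snd) : f s - f t ≤ g s - g t := by
  induction p with
  | nil => simp
  | cons hadj p ih =>
    simp only [darts_cons, List.mem_cons, forall_eq_or_imp] at h
    linarith [h.1, ih h.2]

theorem eq_on_support_of_forall_dart {s t : V} (p : G.Walk s t)
    (h : ∀ d ∈ p.darts, f d.fst - f d.snd ≤ g d.fst - g d.snd) (hs : f s = g s) (ht : f t = g t) :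
    ∀ x ∈ p.support, f x = g x := by
  induction p with
  | nil => simpa using hs
  | cons hadj p ih =>
    simp only [darts_cons, List.mem_cons, forall_eq_or_imp] at h
    have hc := ih h.2 (by linarith [h.1, p.sub_le_sub_of_forall_dart h.2]) ht
    simp only [support_cons, List.mem_cons, forall_eq_or_imp]
    exact ⟨hs, hc⟩

end Walk

theorem exists_walk_to_mem_of_forall_exists_rel [Finite V] {T : Set V} {R : V → V → Prop}
    (u : V → ℝ) (hadj : ∀ x y, R x y → G.Adj x y) (hu : ∀ x y, R x y → u y < u x)
    (hsucc : ∀ x ∉ T, (∃ z, R z x) → ∃ y, R x y) (x : V) (hx : ∃ z, R z x) :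
    ∃ t ∈ T, ∃ p : G.Walk x t, ∀ d ∈ p.darts, R d.fst d.snd := by
  have : IsTrans V (fun a b => u a < u b) := ⟨fun _ _ _ => lt_trans⟩
  have : Std.Irrefl (fun a b : V => u a < u b) := ⟨fun _ => lt_irrefl _⟩
  have hwf := Finite.wellFounded_of_trans_of_irrefl (fun a b : V => u a < u b)
  induction x using hwf.induction with
  | h x ih =>
    by_cases hxT : x ∈ T
    · exact ⟨x, hxT, .nil, by simp⟩
    obtain ⟨y, hxy⟩ := hsucc x hxT hx
    obtain ⟨t, ht, p, hp⟩ := ih y (hu x y hxy) ⟨x, hxy⟩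
    refine ⟨t, ht, .cons (hadj x y hxy) p, ?_⟩
    simpa only [Walk.darts_cons, List.mem_cons, forall_eq_or_imp] using ⟨hxy, hp⟩

theorem Connected.eq_of_eqOn_of_forall_adj (hG : G.Connected) {T : Set V} (hT : T.Nonempty)
    {f g : V → ℝ} (hfg : ∀ t ∈ T, f t = g t)
    (hadj : ∀ x ∉ T, ∀ y, G.Adj x y → f x - f y = g x - g y) : f = g := by
  obtain ⟨t, ht⟩ := hT
  funext x
  obtain ⟨p⟩ := hG.preconnected x t
  induction p with
  | nil => exact hfg _ ht
  | @cons x c t hxc p ih =>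
    by_cases hx : x ∈ T
    · exact hfg x hx
    · linarith [hadj x hx c hxc, ih ht]

theorem exists_adj_grad_eq_neg [Finite V] {ℓ : Sym2 V → ℝ} {v : V → ℝ} {M : ℝ} {x y : V}
    (hmaxmin : sSup {g | ∃ z ∈ G.neighborSet x, g = grad ℓ v x z} =
      -sInf {g | ∃ z ∈ G.neighborSet x, g = grad ℓ v x z})
    (hM : ∀ z, G.Adj x z → |grad ℓ v x z| ≤ M) (hy : G.Adj x y) (hyM : |grad ℓ v x y| = M) :
    ∃ z, G.Adj x z ∧ grad ℓ v x z = -grad ℓ v x y := by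
  have hS : {g | ∃ z ∈ G.neighborSet x, g = grad ℓ v x z}.Finite :=
    (Set.finite_range (grad ℓ v x)).subset (by rintro _ ⟨z, -, rfl⟩; exact ⟨z, rfl⟩)
  obtain ⟨z, hz, hzg⟩ := hS.neg_mem_of_sSup_eq_neg_sInf hmaxmin
    (by rintro _ ⟨z, hz, rfl⟩; exact hM z hz) ⟨y, hy, rfl⟩ hyM
  exact ⟨z, hz, hzg.symm⟩

end SimpleGraph

theorem exists_adj_mem_grad_eq_neg {V : Type*} [Finite V] {G : SimpleGraph V}
    {E : Finset (Sym2 V)} {ℓ : Sym2 V → ℝ} {v : V → ℝ} {M : ℝ} {x y : V}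
    (hℓ : ∀ e ∈ G.edgeSet, 0 < ℓ e) (hinc : ∀ y, G.Adj x y → s(x, y) ∈ E)
    (hmaxmin : sSup {g | ∃ z ∈ G.neighborSet x, g = grad ℓ v x z} =
      -sInf {g | ∃ z ∈ G.neighborSet x, g = grad ℓ v x z})
    (hvM : ∀ e ∈ E, absGrad ℓ v e ≤ M) (hy : G.Adj x y) (hyM : |grad ℓ v x y| = M) :
    ∃ z, G.Adj x z ∧ s(x, z) ∈ E ∧ grad ℓ v x z = -grad ℓ v x y := by
  obtain ⟨z, hz, hzg⟩ := G.exists_adj_grad_eq_neg hmaxmin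
    (fun z hz => (abs_grad (hℓ s(x, z) hz)).trans_le (hvM _ (hinc z hz))) hy hyM
  exact ⟨z, hz, hinc z hz, hzg⟩

def IsSteep {V : Type*} (G : SimpleGraph V) (E : Finset (Sym2 V)) (ℓ : Sym2 V → ℝ) (v : V → ℝ)
    (M : ℝ) (x y : V) : Prop :=
  G.Adj x y ∧ s(x, y) ∈ E ∧ grad ℓ v x y = M

namespace IsSteep

variable {V : Type*} {G : SimpleGraph V} {E : Finset (Sym2 V)} {ℓ : Sym2 V → ℝ} {v w : V → ℝ}
  {M : ℝ} {x y : V}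

theorem sub_eq (hℓ : ∀ e ∈ G.edgeSet, 0 < ℓ e) (h : IsSteep G E ℓ v M x y) :
    v x - v y = M * ℓ s(x, y) := by
  rw [← h.2.2, grad, div_mul_cancel₀ _ (hℓ s(x, y) h.1).ne']

theorem lt (hℓ : ∀ e ∈ G.edgeSet, 0 < ℓ e) (hM : 0 < M) (h : IsSteep G E ℓ v M x y) :
    v y < v x := by
  linarith [h.sub_eq hℓ, mul_pos hM (hℓ s(x, y) h.1)]

theorem sub_le_sub (hℓ : ∀ e ∈ G.edgeSet, 0 < ℓ e) (hwM : ∀ e ∈ E, absGrad ℓ w e ≤ M)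
    (h : IsSteep G E ℓ v M x y) : w x - w y ≤ v x - v y := by
  linarith [h.sub_eq hℓ, le_abs_self (w x - w y),
    abs_sub_le_of_absGrad_le (hℓ s(x, y) h.1) (hwM _ h.2.1)]

variable [Finite V]

theorem exists_isSteep_from (hℓ : ∀ e ∈ G.edgeSet, 0 < ℓ e)
    (hinc : ∀ y, G.Adj x y → s(x, y) ∈ E)
    (hmaxmin : sSup {g | ∃ z ∈ G.neighborSet x, g = grad ℓ v x z} =
      -sInf {g | ∃ z ∈ G.neighborSet x, g = grad ℓ v x z})
    (hvM : ∀ e ∈ E, absGrad ℓ v e ≤ M) (hM : 0 ≤ M) {z : V} (hzx : IsSteep G E ℓ v M z x) :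
    ∃ y, IsSteep G E ℓ v M x y := by
  have hg : grad ℓ v x z = -M := by rw [grad_swap, hzx.2.2]
  obtain ⟨y, hy, hyE, hyg⟩ := exists_adj_mem_grad_eq_neg hℓ hinc hmaxmin hvM hzx.1.symm
    (by rw [hg, abs_neg, abs_of_nonneg hM])
  exact ⟨y, hy, hyE, by rw [hyg, hg, neg_neg]⟩

theorem exists_isSteep_to (hℓ : ∀ e ∈ G.edgeSet, 0 < ℓ e)
    (hinc : ∀ y, G.Adj x y → s(x, y) ∈ E)
    (hmaxmin : sSup {g | ∃ z ∈ G.neighborSet x, g = grad ℓ v x z} =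
      -sInf {g | ∃ z ∈ G.neighborSet x, g = grad ℓ v x z})
    (hvM : ∀ e ∈ E, absGrad ℓ v e ≤ M) (hM : 0 ≤ M) (hxy : IsSteep G E ℓ v M x y) :
    ∃ z, IsSteep G E ℓ v M z x := by
  obtain ⟨z, hz, hzE, hzg⟩ := exists_adj_mem_grad_eq_neg hℓ hinc hmaxmin hvM hxy.1
    (by rw [hxy.2.2, abs_of_nonneg hM])
  exact ⟨z, hz.symm, Sym2.eq_swap ▸ hzE, by rw [grad_swap, hzg, hxy.2.2, neg_neg]⟩

theorem eq_and_eq_of_absGrad_le {T : Set V} (hℓ : ∀ e ∈ G.edgeSet, 0 < ℓ e) (hM : 0 < M)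
    (hinc : ∀ x ∉ T, ∀ y, G.Adj x y → s(x, y) ∈ E)
    (hmaxmin : ∀ x ∉ T, sSup {g | ∃ z ∈ G.neighborSet x, g = grad ℓ v x z} =
      -sInf {g | ∃ z ∈ G.neighborSet x, g = grad ℓ v x z})
    (hvM : ∀ e ∈ E, absGrad ℓ v e ≤ M) (hwM : ∀ e ∈ E, absGrad ℓ w e ≤ M)
    (hwv : ∀ t ∈ T, w t = v t) (hxy : IsSteep G E ℓ v M x y) : w x = v x ∧ w y = v y := by
  obtain ⟨t₂, ht₂, p₂, hp₂⟩ := exists_walk_to_mem_of_forall_exists_rel v (fun _ _ h => h.1)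
    (fun _ _ h => h.lt hℓ hM)
    (fun a ha ⟨_, hba⟩ => hba.exists_isSteep_from hℓ (hinc a ha) (hmaxmin a ha) hvM hM.le) y
    ⟨x, hxy⟩
  obtain ⟨t₁, ht₁, p₁, hp₁⟩ := exists_walk_to_mem_of_forall_exists_rel
    (R := fun a b => IsSteep G E ℓ v M b a) (-v) (fun _ _ h => h.1.symm)
    (fun _ _ h => neg_lt_neg (h.lt hℓ hM))
    (fun a ha ⟨_, hab⟩ => hab.exists_isSteep_to hℓ (hinc a ha) (hmaxmin a ha) hvM hM.le) x
    ⟨y, hxy⟩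
  let Q : G.Walk t₁ t₂ := p₁.reverse.append (.cons hxy.1 p₂)
  have hQ : ∀ d ∈ Q.darts, IsSteep G E ℓ v M d.fst d.snd := by
    simp only [Q, Walk.darts_append, Walk.darts_reverse, Walk.darts_cons, List.mem_append,
      List.mem_reverse, List.mem_map, List.mem_cons]
    rintro d ((⟨d, hd, rfl⟩ | rfl | hd))
    exacts [hp₁ d hd, hxy, hp₂ d hd]
  have hwQ := Q.eq_on_support_of_forall_dart (fun d hd => (hQ d hd).sub_le_sub hℓ hwM)
    (hwv t₁ ht₁) (hwv t₂ ht₂)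
  exact ⟨hwQ x (by simp [Q]), hwQ y (by simp [Q])⟩

end IsSteep

section Induction

variable {V : Type*} [Finite V] {G : SimpleGraph V} {ℓ : Sym2 V → ℝ} {v w : V → ℝ}
  {T : Set V} {E : Finset (Sym2 V)} {M : ℝ}

theorem eq_on_edge_of_absGrad_eq_max (hℓ : ∀ e ∈ G.edgeSet, 0 < ℓ e) (hE : ↑E ⊆ G.edgeSet)
    (hM : 0 < M) (hinc : ∀ x ∉ T, ∀ y, G.Adj x y → s(x, y) ∈ E)
    (hmaxmin : ∀ x ∉ T, sSup {g | ∃ y ∈ G.neighborSet x, g = grad ℓ v x y} =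
      -sInf {g | ∃ y ∈ G.neighborSet x, g = grad ℓ v x y})
    (hvM : ∀ e ∈ E, absGrad ℓ v e ≤ M) (hwM : ∀ e ∈ E, absGrad ℓ w e ≤ M)
    (hwv : ∀ t ∈ T, w t = v t) {e : Sym2 V} (he : e ∈ E) (heM : absGrad ℓ v e = M) :
    ∀ x ∈ e, w x = v x := by
  induction e using Sym2.ind with
  | h a b =>
    have hab : G.Adj a b := hE he
    have hsteep : IsSteep G E ℓ v M a b ∨ IsSteep G E ℓ v M b a := by
      rcases (abs_eq hM.le).1 ((abs_grad (hℓ s(a, b) hab)).trans heM) with h | h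
      · exact .inl ⟨hab, he, h⟩
      · exact .inr ⟨hab.symm, Sym2.eq_swap ▸ he, by rw [grad_swap, h, neg_neg]⟩
    have hfix : ∀ {x y}, IsSteep G E ℓ v M x y → w x = v x ∧ w y = v y :=
      fun h => h.eq_and_eq_of_absGrad_le hℓ hM hinc hmaxmin hvM hwM hwv
    intro x hx
    rcases Sym2.mem_iff.1 hx with rfl | rfl <;> rcases hsteep with h | h
    exacts [(hfix h).1, (hfix h).2, (hfix h).2, (hfix h).1]

theorem lex_sort_absGrad_of_maxmin (hG : G.Connected) (hℓ : ∀ e ∈ G.edgeSet, 0 < ℓ e)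
    (hE : ↑E ⊆ G.edgeSet) (hT : T.Nonempty) (hinc : ∀ x ∉ T, ∀ y, G.Adj x y → s(x, y) ∈ E)
    (hmaxmin : ∀ x ∉ T, sSup {g | ∃ y ∈ G.neighborSet x, g = grad ℓ v x y} =
      -sInf {g | ∃ y ∈ G.neighborSet x, g = grad ℓ v x y})
    (hwv : ∀ t ∈ T, w t = v t) (hne : w ≠ v) :
    List.Lex (· < ·) ((E.val.map (absGrad ℓ v)).sort (· ≥ ·))
      ((E.val.map (absGrad ℓ w)).sort (· ≥ ·)) := by
  induction E using Finset.strongInduction generalizing T with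
  | H E ih =>
  obtain ⟨e₀, he₀, hpos⟩ : ∃ e ∈ E, 0 < absGrad ℓ v e ∨ 0 < absGrad ℓ w e := by
    by_contra! hzero
    refine hne (hG.eq_of_eqOn_of_forall_adj hT hwv fun x hx y hxy => ?_)
    have hv := abs_sub_le_of_absGrad_le (hℓ s(x, y) hxy) (hzero _ (hinc x hx y hxy)).1
    have hw := abs_sub_le_of_absGrad_le (hℓ s(x, y) hxy) (hzero _ (hinc x hx y hxy)).2
    rw [zero_mul, abs_nonpos_iff] at hv hw
    rw [hv, hw]
  obtain ⟨emax, hemax, hvM⟩ := E.exists_max_image (absGrad ℓ v) ⟨e₀, he₀⟩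
  set M := absGrad ℓ v emax
  by_cases hw : ∃ e ∈ E, M < absGrad ℓ w e
  · obtain ⟨e, he, hMe⟩ := hw
    refine lex_sort_ge_of_forall_lt (c := absGrad ℓ w e) ?_ (Multiset.mem_map_of_mem _ he)
    simp only [Multiset.mem_map, Finset.mem_val]
    rintro _ ⟨e', he', rfl⟩
    exact (hvM e' he').trans_lt hMe
  push Not at hw
  have hM : 0 < M := hpos.elim (·.trans_le (hvM e₀ he₀)) (·.trans_le (hw e₀ he₀))
  have hfix : ∀ e ∈ E, absGrad ℓ v e = M → ∀ x ∈ e, w x = v x :=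
    fun e he heM => eq_on_edge_of_absGrad_eq_max hℓ hE hM hinc hmaxmin hvM hw hwv he heM
  set T' := T ∪ {x | ∃ e ∈ E, absGrad ℓ v e = M ∧ x ∈ e}
  have hinc' : ∀ x ∉ T', ∀ y, G.Adj x y → s(x, y) ∈ E.filter (fun e => ¬absGrad ℓ v e = M) := by
    intro x hx y hxy
    simp only [T', Set.mem_union, Set.mem_ofPred_eq, not_or, not_exists, not_and] at hx
    exact Finset.mem_filter.2
      ⟨hinc x hx.1 y hxy, fun h => hx.2 _ (hinc x hx.1 y hxy) h (Sym2.mem_mk_left x y)⟩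
  have hwv' : ∀ t ∈ T', w t = v t := by
    rintro t (ht | ⟨e, he, heM, hte⟩)
    exacts [hwv t ht, hfix e he heM t hte]
  rw [sort_ge_map_eq_replicate_append E _ (absGrad ℓ v · = M) (fun _ _ h => h) hvM,
    sort_ge_map_eq_replicate_append E _ (absGrad ℓ v · = M)
      (fun e he heM => (absGrad_congr (hfix e he heM)).trans heM) hw]
  exact List.Lex.append_left _ (ih _ (Finset.filter_ssubset.2 ⟨emax, hemax, not_not.2 rfl⟩)
    ((Finset.coe_subset.2 (Finset.filter_subset _ _)).trans hE) (hT.mono Set.subset_union_left)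
    hinc' (fun x hx => hmaxmin x fun h => hx (.inl h)) hwv') _

end Induction

/-- If an extension `v` of `v₀` satisfies the max-min gradient averaging property
at every non-terminal, then `v` is the unique lex-minimizer of `(G, v₀)`. -/
theorem maxmin_averaging_implies_lex_min {V : Type*} [Fintype V] [DecidableEq V]
    (G : SimpleGraph V) [DecidableRel G.Adj] (hG : G.Connected)
    (ℓ : Sym2 V → ℝ) (hℓ : ∀ e ∈ G.edgeSet, 0 < ℓ e)
    (T : Set V) (hT : T.Nonempty) (v₀ : V → ℝ)
    (v : V → ℝ) (hext : ∀ t ∈ T, v t = v₀ t)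
    (hmaxmin : ∀ x : V, x ∉ T →
      sSup {g : ℝ | ∃ y ∈ G.neighborSet x, g = (v x - v y) / ℓ s(x, y)} =
        - sInf {g : ℝ | ∃ y ∈ G.neighborSet x, g = (v x - v y) / ℓ s(x, y)}) :
    ∀ w : V → ℝ, (∀ t ∈ T, w t = v₀ t) → w ≠ v →
      List.Lex (· < ·) (gradList G ℓ v) (gradList G ℓ w) := by
  intro w hw hne
  exact lex_sort_absGrad_of_maxmin hG hℓ (by simp) hT (fun x _ y hxy => G.mem_edgeFinset.2 hxy)
    hmaxmin (fun t ht => (hw t ht).trans (hext t ht).symm) hne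
end

section
/- Let G be a finite connected weighted graph with unit edge lengths, T a nonempty terminal set, and v the lex-minimizer of a partial assignment v₀ on T. Then for every non-terminal vertex x, v(x) = (max_{y ~ x} v(y) + min_{y ~ x} v(y)) / 2. -/
/-! If `v x` is not the midpoint `c` of the extreme neighbour values `m ≤ M`, the largest
gradient on an edge at `x` is `g = max |v x - M| |v x - m| > (M - m) / 2`. Resetting `v x` to `c`
brings every gradient at `x` down to at most `(M - m) / 2` and leaves all other edges alone, so the
new gradient multiset has as many entries `≥ s` for every `s > g` and strictly fewer entries `≥ g`.
For decreasingly sorted lists this says that the new list is lexicographically smaller,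
contradicting the minimality of `v`. -/

namespace List

variable {α : Type*} [LinearOrder α]

theorem lex_lt_of_pairwise_ge_of_countP {l₁ l₂ : List α} (h₁ : l₁.Pairwise (· ≥ ·))
    (h₂ : l₂.Pairwise (· ≥ ·)) (a : α) (hlt : l₁.countP (a ≤ ·) < l₂.countP (a ≤ ·))
    (heq : ∀ b, a < b → l₁.countP (b ≤ ·) = l₂.countP (b ≤ ·)) :
    Lex (· < ·) l₁ l₂ := by
  induction l₂ generalizing l₁ with
  | nil => simp at hlt
  | cons c l₂ ih =>
    cases l₁ with
    | nil => exact .nil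
    | cons d l₁ =>
      rw [pairwise_cons] at h₁ h₂
      rcases lt_trichotomy d c with hdc | rfl | hcd
      · exact .rel hdc
      · refine .cons (ih h₁.2 h₂.2 ?_ fun b hb => ?_)
        · simpa [countP_cons] using hlt
        · simpa [countP_cons] using heq b hb
      · have h_lt_d : ∀ e ∈ c :: l₂, e < d := by
          simp only [mem_cons, forall_eq_or_imp]
          exact ⟨hcd, fun e he => (h₂.1 e he).trans_lt hcd⟩
        have h_none : ∀ b, d ≤ b → (c :: l₂).countP (b ≤ ·) = 0 := fun b hb =>
          countP_eq_zero.mpr fun e he => by simpa using (h_lt_d e he).trans_le hb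
        by_cases had : a < d
        · simpa [countP_cons, h_none d le_rfl] using heq d had
        · simp [h_none a (not_lt.mp had)] at hlt

end List

theorem Multiset.lex_sort_ge_of_countP {α : Type*} [LinearOrder α] {s t : Multiset α}
    (a : α) (hlt : s.countP (a ≤ ·) < t.countP (a ≤ ·))
    (heq : ∀ b, a < b → s.countP (b ≤ ·) = t.countP (b ≤ ·)) :
    List.Lex (· < ·) (s.sort (· ≥ ·)) (t.sort (· ≥ ·)) := by
  rw [← s.sort_eq (· ≥ ·), ← t.sort_eq (· ≥ ·)] at hlt heq
  simp only [Multiset.coe_countP] at hlt heq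
  exact List.lex_lt_of_pairwise_ge_of_countP (pairwise_sort ..) (pairwise_sort ..) a hlt heq

section Gradients

variable {V : Type*}

lemma absGrad_one_mk (v : V → ℝ) (a b : V) :
    absGrad (fun _ => (1 : ℝ)) v s(a, b) = |v a - v b| := by
  simp [absGrad]

lemma absGrad_congr_of_notMem (ℓ : Sym2 V → ℝ) {v w : V → ℝ} {x : V}
    (hvw : ∀ y ≠ x, w y = v y) {e : Sym2 V} (he : x ∉ e) :
    absGrad ℓ w e = absGrad ℓ v e := by
  induction e using Sym2.ind with
  | _ a b =>
    simp only [Sym2.mem_iff, not_or] at he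
    simp [absGrad, hvw a (Ne.symm he.1), hvw b (Ne.symm he.2)]

variable [Fintype V] [DecidableEq V] (G : SimpleGraph V) [DecidableRel G.Adj] (ℓ : Sym2 V → ℝ)

theorem lex_gradList_of_incident_lt_max {v w : V → ℝ} {x : V} (hvw : ∀ y ≠ x, w y = v y) {g : ℝ}
    (hw : ∀ y, G.Adj x y → absGrad ℓ w s(x, y) < g)
    (hv : ∀ y, G.Adj x y → absGrad ℓ v s(x, y) ≤ g)
    (hvg : ∃ y, G.Adj x y ∧ absGrad ℓ v s(x, y) = g) :
    List.Lex (· < ·) (gradList G ℓ w) (gradList G ℓ v) := by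
  set E := G.edgeFinset.val
  set I := E.filter (x ∈ ·)
  have incident (e : Sym2 V) (he : e ∈ I) : ∃ y, G.Adj x y ∧ e = s(x, y) := by
    rw [Multiset.mem_filter] at he
    obtain ⟨y, rfl⟩ := Sym2.mem_iff_exists.mp he.2
    exact ⟨y, by simpa [E] using he.1, rfl⟩
  have split (u : V → ℝ) (hu : ∀ y ≠ x, u y = v y) (b : ℝ) :
      (E.map (absGrad ℓ u)).countP (b ≤ ·) =
        (I.map (absGrad ℓ u)).countP (b ≤ ·) +
          ((E.filter (x ∉ ·)).map (absGrad ℓ v)).countP (b ≤ ·) := by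
    conv_lhs => rw [← Multiset.filter_add_not (x ∈ ·) E]
    rw [Multiset.map_add, Multiset.countP_add, Multiset.map_congr rfl fun e he =>
      absGrad_congr_of_notMem ℓ hu (Multiset.mem_filter.mp he).2]
  have hw_none (b : ℝ) (hb : g ≤ b) : (I.map (absGrad ℓ w)).countP (b ≤ ·) = 0 :=
    Multiset.countP_eq_zero.mpr <| Multiset.forall_mem_map_iff.mpr fun e he => by
      obtain ⟨y, hy, rfl⟩ := incident e he
      exact not_le.mpr ((hw y hy).trans_le hb)
  apply Multiset.lex_sort_ge_of_countP g
  · rw [split w hvw, split v (fun _ _ => rfl), hw_none g le_rfl]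
    obtain ⟨y, hy, hyg⟩ := hvg
    have : 0 < (I.map (absGrad ℓ v)).countP (g ≤ ·) :=
      Multiset.countP_pos.mpr ⟨_, Multiset.mem_map_of_mem _ (Multiset.mem_filter.mpr
        ⟨by simpa [E] using hy, Sym2.mem_mk_left x y⟩), hyg.ge⟩
    omega
  · intro b hb
    have hv_none : (I.map (absGrad ℓ v)).countP (b ≤ ·) = 0 :=
      Multiset.countP_eq_zero.mpr <| Multiset.forall_mem_map_iff.mpr fun e he => by
        obtain ⟨y, hy, rfl⟩ := incident e he
        exact not_le.mpr ((hv y hy).trans_lt hb)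
    rw [split w hvw, split v (fun _ _ => rfl), hw_none b hb.le, hv_none]

end Gradients

lemma SimpleGraph.Connected.exists_adj_of_ne {V : Type*} {G : SimpleGraph V} (hG : G.Connected)
    {x t : V} (hxt : x ≠ t) : ∃ y, G.Adj x y :=
  let p := (hG.preconnected x t).some
  ⟨_, p.adj_snd (p.not_nil_of_ne hxt)⟩

lemma abs_midpoint_sub_lt_max {m M z r : ℝ} (hr : r ∈ Set.Icc m M) (hz : z ≠ (M + m) / 2) :
    |(M + m) / 2 - r| < max |z - M| |z - m| := by
  have hmid : |(M + m) / 2 - r| ≤ (M - m) / 2 :=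
    abs_sub_le_iff.mpr ⟨by linarith [hr.1], by linarith [hr.2]⟩
  refine hmid.trans_lt ?_
  rcases hz.lt_or_gt with h | h
  · exact lt_max_of_lt_left (by linarith [neg_le_abs (z - M)])
  · exact lt_max_of_lt_right (by linarith [le_abs_self (z - m)])

/-- On a unit-length graph, the lex-minimizer satisfies
`v x = (max of neighbors + min of neighbors) / 2` at every non-terminal `x`. -/
theorem lex_min_maxmin_average_unit_lengths {V : Type*} [Fintype V] [DecidableEq V]
    (G : SimpleGraph V) [DecidableRel G.Adj] (hG : G.Connected)
    (T : Set V) (hT : T.Nonempty) (v₀ : V → ℝ)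
    (v : V → ℝ) (hext : ∀ t ∈ T, v t = v₀ t)
    (hlex : ∀ w : V → ℝ, (∀ t ∈ T, w t = v₀ t) → w ≠ v →
      List.Lex (· < ·) (gradList G (fun _ => (1 : ℝ)) v)
        (gradList G (fun _ => (1 : ℝ)) w)) :
    ∀ x : V, x ∉ T →
      v x = (sSup {r : ℝ | ∃ y ∈ G.neighborSet x, r = v y} +
          sInf {r : ℝ | ∃ y ∈ G.neighborSet x, r = v y}) / 2 := by
  intro x hx
  obtain ⟨t, ht⟩ := hT
  obtain ⟨y₀, hy₀⟩ := hG.exists_adj_of_ne fun h : x = t => hx (h ▸ ht)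
  have hS : {r : ℝ | ∃ y ∈ G.neighborSet x, r = v y} = v '' G.neighborSet x := by
    ext; simp [eq_comm]
  rw [hS]
  set S := v '' G.neighborSet x
  have hSfin : S.Finite := (Set.toFinite _).image v
  have hSne : S.Nonempty := ⟨_, y₀, hy₀, rfl⟩
  obtain ⟨yM, hyM, hM⟩ := hSne.csSup_mem hSfin
  obtain ⟨ym, hym, hm⟩ := hSne.csInf_mem hSfin
  have hbounds (y : V) (hy : G.Adj x y) : v y ∈ Set.Icc (sInf S) (sSup S) :=
    ⟨csInf_le hSfin.bddBelow ⟨y, hy, rfl⟩, le_csSup hSfin.bddAbove ⟨y, hy, rfl⟩⟩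
  by_contra hne
  set w := Function.update v x ((sSup S + sInf S) / 2)
  have hwx : w x = (sSup S + sInf S) / 2 := Function.update_self x _ v
  have hvw (y : V) (hy : y ≠ x) : w y = v y := Function.update_of_ne hy _ _
  have hwT (t : V) (ht : t ∈ T) : w t = v₀ t := (hvw t fun h => hx (h ▸ ht)).trans (hext t ht)
  have hwv : w ≠ v := fun h => hne (h ▸ hwx)
  refine asymm (hlex w hwT hwv) (lex_gradList_of_incident_lt_max G _ hvw
    (g := max |v x - sSup S| |v x - sInf S|) (fun y hy => ?_) (fun y hy => ?_) ?_)
  · rw [absGrad_one_mk, hwx, hvw y (G.ne_of_adj hy).symm]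
    exact abs_midpoint_sub_lt_max (hbounds y hy) hne
  · rw [absGrad_one_mk]
    exact abs_le_max_abs_abs (by linarith [(hbounds y hy).2]) (by linarith [(hbounds y hy).1])
  · rcases max_choice |v x - sSup S| |v x - sInf S| with h | h
    · exact ⟨yM, hyM, by rw [absGrad_one_mk, hM, h]⟩
    · exact ⟨ym, hym, by rw [absGrad_one_mk, hm, h]⟩
end

section
/- For any c, d ∈ ℝ with c ≥ 0 and any well-posed instance (G, v₀), the lex-minimizer commutes with affine maps: lex[c·v₀ + d] = c·lex[v₀] + d. -/
/-!
For `c > 0` the map `w ↦ c * w + d` is a bijection from the extensions of `v₀` onto those of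
`c * v₀ + d` that multiplies every edge gradient by `c`. It therefore preserves the lexicographic
order of the sorted gradient vectors and sends the lex-minimizer to a lex-minimizer, which is unique
because the lexicographic order is asymmetric. For `c = 0` the constant extension `d` has only zero
gradients, and no vector of nonnegative gradients lies lexicographically strictly below it.
-/

theorem List.not_lt_replicate {α : Type*} [LT α] {a : α} :
    ∀ {n : ℕ} {l : List α}, (∀ x ∈ l, ¬ x < a) → n ≤ l.length → ¬ l < List.replicate n a
  | 0, _, _, _, h => List.not_lt_nil _ h
  | _ + 1, [], _, hlen, _ => by simp at hlen
  | n + 1, x :: l, hl, hlen, h => by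
    rcases List.cons_lt_cons_iff.1 h with hx | ⟨-, h⟩
    · exact hl x List.mem_cons_self hx
    · exact List.not_lt_replicate (fun y hy => hl y (List.mem_cons_of_mem x hy))
        (Nat.le_of_succ_le_succ hlen) h

theorem absGrad_const_mul_add {V : Type*} (ℓ : Sym2 V → ℝ) (v : V → ℝ) {c : ℝ} (hc : 0 ≤ c)
    (d : ℝ) (e : Sym2 V) :
    absGrad ℓ (fun x => c * v x + d) e = c * absGrad ℓ v e := by
  induction e using Sym2.ind with
  | _ x y =>
    simp only [absGrad, Sym2.lift_mk]
    rw [add_sub_add_right_eq_sub, ← mul_sub, abs_mul, abs_of_nonneg hc, mul_div_assoc]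

theorem absGrad_const {V : Type*} (ℓ : Sym2 V → ℝ) (d : ℝ) (e : Sym2 V) :
    absGrad ℓ (fun _ => d) e = 0 := by
  simpa using absGrad_const_mul_add ℓ (fun _ => (0 : ℝ)) le_rfl d e

section Gradients

variable {V : Type*} [Fintype V] [DecidableEq V] (G : SimpleGraph V) [DecidableRel G.Adj]
  (ℓ : Sym2 V → ℝ)

theorem mem_gradList {v : V → ℝ} {r : ℝ} :
    r ∈ gradList G ℓ v ↔ ∃ e ∈ G.edgeSet, absGrad ℓ v e = r := by
  simp [gradList]

theorem length_gradList (v : V → ℝ) : (gradList G ℓ v).length = G.edgeFinset.card := by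
  simp [gradList]

theorem gradList_nonneg {ℓ : Sym2 V → ℝ} (hℓ : ∀ e ∈ G.edgeSet, 0 < ℓ e) {v : V → ℝ} {r : ℝ}
    (hr : r ∈ gradList G ℓ v) : 0 ≤ r := by
  obtain ⟨e, he, rfl⟩ := (mem_gradList G ℓ).1 hr
  exact div_nonneg (by induction e using Sym2.ind; exact abs_nonneg _) (hℓ e he).le

theorem gradList_const (d : ℝ) :
    gradList G ℓ (fun _ => d) = List.replicate G.edgeFinset.card 0 := by
  refine List.eq_replicate_iff.2 ⟨length_gradList G ℓ _, fun r hr => ?_⟩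
  obtain ⟨e, -, rfl⟩ := (mem_gradList G ℓ).1 hr
  exact absGrad_const ℓ d e

theorem gradList_const_mul_add (v : V → ℝ) {c : ℝ} (hc : 0 < c) (d : ℝ) :
    gradList G ℓ (fun x => c * v x + d) = (gradList G ℓ v).map (c * ·) := by
  rw [gradList, gradList, Multiset.map_sort (c * ·) _ (· ≥ ·) (· ≥ ·)
    fun a _ b _ => (mul_le_mul_iff_right₀ hc).symm, Multiset.map_map]
  congr 2
  exact funext (absGrad_const_mul_add ℓ v hc.le d)

theorem not_gradList_lt_const {ℓ : Sym2 V → ℝ} (hℓ : ∀ e ∈ G.edgeSet, 0 < ℓ e) (v : V → ℝ)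
    (d : ℝ) : ¬ gradList G ℓ v < gradList G ℓ (fun _ => d) := by
  rw [gradList_const]
  exact List.not_lt_replicate (fun r hr => (gradList_nonneg G hℓ hr).not_gt)
    (length_gradList G ℓ v).ge

def IsLexMinimizer (T : Set V) (g u : V → ℝ) : Prop :=
  (∀ t ∈ T, u t = g t) ∧
    ∀ w : V → ℝ, (∀ t ∈ T, w t = g t) → w ≠ u → gradList G ℓ u < gradList G ℓ w

variable {G ℓ} {T : Set V} {g u : V → ℝ}

theorem IsLexMinimizer.eq_of_not_lt (hu : IsLexMinimizer G ℓ T g u) {w : V → ℝ}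
    (hw : ∀ t ∈ T, w t = g t) (hlt : ¬ gradList G ℓ u < gradList G ℓ w) : w = u :=
  not_imp_comm.1 (hu.2 w hw) hlt

theorem IsLexMinimizer.unique {u' : V → ℝ} (hu : IsLexMinimizer G ℓ T g u)
    (hu' : IsLexMinimizer G ℓ T g u') : u = u' := by
  by_contra hne
  exact List.lt_asymm (hu.2 u' hu'.1 (Ne.symm hne)) (hu'.2 u hu.1 hne)

theorem IsLexMinimizer.const_mul_add (hu : IsLexMinimizer G ℓ T g u) {c : ℝ} (hc : 0 < c)
    (d : ℝ) : IsLexMinimizer G ℓ T (fun x => c * g x + d) (fun x => c * u x + d) := by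
  refine ⟨fun t ht => by simp only [hu.1 t ht], fun w hw hne => ?_⟩
  set w' : V → ℝ := fun x => c⁻¹ * (w x - d)
  have hw'w : (fun x => c * w' x + d) = w := by
    funext x
    simp only [w', mul_inv_cancel_left₀ hc.ne', sub_add_cancel]
  have hw' : ∀ t ∈ T, w' t = g t := fun t ht => by
    simp only [w', hw t ht, add_sub_cancel_right, inv_mul_cancel_left₀ hc.ne']
  rw [← hw'w, gradList_const_mul_add G ℓ u hc, gradList_const_mul_add G ℓ w' hc]
  exact List.map_lt (fun _ _ h => mul_lt_mul_of_pos_left h hc)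
    (hu.2 w' hw' fun h => hne (by rw [← hw'w, h]))

end Gradients

theorem lex_min_affine_general {V : Type*} [Fintype V] [DecidableEq V]
    (G : SimpleGraph V) [DecidableRel G.Adj]
    (ℓ : Sym2 V → ℝ) (hℓ : ∀ e ∈ G.edgeSet, 0 < ℓ e)
    (T : Set V) (v₀ : V → ℝ) (c d : ℝ) (hc : 0 ≤ c)
    (u u' : V → ℝ)
    (hext : ∀ t ∈ T, u t = v₀ t)
    (hlex : ∀ w : V → ℝ, (∀ t ∈ T, w t = v₀ t) → w ≠ u →
      List.Lex (· < ·) (gradList G ℓ u) (gradList G ℓ w))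
    (hext' : ∀ t ∈ T, u' t = c * v₀ t + d)
    (hlex' : ∀ w : V → ℝ, (∀ t ∈ T, w t = c * v₀ t + d) → w ≠ u' →
      List.Lex (· < ·) (gradList G ℓ u') (gradList G ℓ w)) :
    ∀ x : V, u' x = c * u x + d := by
  have hu : IsLexMinimizer G ℓ T v₀ u := ⟨hext, hlex⟩
  have hu' : IsLexMinimizer G ℓ T (fun x => c * v₀ x + d) u' := ⟨hext', hlex'⟩
  suffices h : (fun x => c * u x + d) = u' from fun x => (congrFun h x).symm
  rcases hc.eq_or_lt with rfl | hc
  · simp only [zero_mul, zero_add] at hu' ⊢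
    exact hu'.eq_of_not_lt (fun _ _ => rfl) (not_gradList_lt_const G hℓ u' d)
  · exact (hu.const_mul_add hc d).unique hu'

/-- The lex-minimizer commutes with affine maps: `lex[c·v₀ + d] = c·lex[v₀] + d` for `c ≥ 0`. -/
theorem lex_min_affine {V : Type*} [Fintype V] [DecidableEq V]
    (G : SimpleGraph V) [DecidableRel G.Adj] (hG : G.Connected)
    (ℓ : Sym2 V → ℝ) (hℓ : ∀ e ∈ G.edgeSet, 0 < ℓ e)
    (T : Set V) (hT : T.Nonempty) (v₀ : V → ℝ) (c d : ℝ) (hc : 0 ≤ c)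
    (u u' : V → ℝ)
    (hext : ∀ t ∈ T, u t = v₀ t)
    (hlex : ∀ w : V → ℝ, (∀ t ∈ T, w t = v₀ t) → w ≠ u →
      List.Lex (· < ·) (gradList G ℓ u) (gradList G ℓ w))
    (hext' : ∀ t ∈ T, u' t = c * v₀ t + d)
    (hlex' : ∀ w : V → ℝ, (∀ t ∈ T, w t = c * v₀ t + d) → w ≠ u' →
      List.Lex (· < ·) (gradList G ℓ u') (gradList G ℓ w)) :
    ∀ x : V, u' x = c * u x + d :=
  lex_min_affine_general G ℓ hℓ T v₀ c d hc u u' hext hlex hext' hlex'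
end

section
/- Let V be finite, T ⊆ V nonempty, and consider the affine subspace A of ℝ^E consisting of gradient vectors of extensions of v₀ over edges of a finite connected weighted graph G. For p ∈ (1,∞), let v_p be the unique extension of v₀ minimizing the ℓ_p norm of its edge gradient vector. Then v_p converges pointwise, as p → ∞, to the lex-minimizer of (G, v₀). -/
/-!
The minimizers `v_p` stay in a compact set: the `p`-energy of `v_p` is at most that of the
lex-minimizer `v*`, which bounds every edge gradient of `v_p`, and the values are then bounded
along paths from a terminal. So it suffices to show that every cluster point `w` (as `p → ∞`)
equals `v*`. Let `D` be the set of edges on which `w` and `v*` have different gradients.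
Comparing `v_p` with `v_p - (w - v*)`, whose gradients agree with those of `v_p` off `D`, and
letting `p → ∞` gives `max_D |∇w| ≤ max_D |∇v*|`. Conversely, if `D ≠ ∅`, strict convexity of
`|·|` puts every gradient of the average `(w + v*)/2` on `D` strictly below `max_D |∇v*|`, while
off `D` it has the gradients of `v*`; so it beats `v*` lexicographically unless
`max_D |∇v*| < max_D |∇w|`. Hence `D = ∅`, and `w = v*` by connectivity.
-/

open Filter Topology Finset

theorem eventually_mul_rpow_lt_rpow {θ θ' : ℝ} (hθ : 0 < θ) (hθθ' : θ < θ') (K : ℝ) :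
    ∀ᶠ p : ℝ in atTop, K * θ ^ p < θ' ^ p := by
  refine ((tendsto_rpow_atTop_of_base_gt_one _ ((one_lt_div hθ).2 hθθ')).eventually_gt_atTop K).mono
    fun p hp => ?_
  calc K * θ ^ p < (θ' / θ) ^ p * θ ^ p := by gcongr
    _ = θ' ^ p := by rw [Real.div_rpow (hθ.trans hθθ').le hθ.le, div_mul_cancel₀]; positivity

theorem Finset.le_card_mul_sum_of_sum_rpow_le {ι : Type*} {s : Finset ι} {f g : ι → ℝ}
    (hf : ∀ i ∈ s, 0 ≤ f i) (hg : ∀ i ∈ s, 0 ≤ g i) {p : ℝ} (hp : 1 ≤ p)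
    (h : ∑ i ∈ s, f i ^ p ≤ ∑ i ∈ s, g i ^ p) {i : ι} (hi : i ∈ s) :
    f i ≤ #s * ∑ j ∈ s, g j := by
  have hsum : 0 ≤ ∑ j ∈ s, g j := sum_nonneg hg
  have hcard : (1 : ℝ) ≤ #s := by exact_mod_cast card_pos.2 ⟨i, hi⟩
  refine (Real.rpow_le_rpow_iff (z := p) (hf i hi) (mul_nonneg (by positivity) hsum)
    (by linarith)).1 ?_
  calc f i ^ p ≤ ∑ j ∈ s, f j ^ p :=
        single_le_sum (fun j hj => Real.rpow_nonneg (hf j hj) p) hi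
    _ ≤ ∑ j ∈ s, g j ^ p := h
    _ ≤ ∑ _j ∈ s, (∑ k ∈ s, g k) ^ p :=
        sum_le_sum fun j hj => Real.rpow_le_rpow (hg j hj) (single_le_sum hg hj) (by linarith)
    _ = #s * (∑ k ∈ s, g k) ^ p := by rw [sum_const, nsmul_eq_mul]
    _ ≤ (#s : ℝ) ^ p * (∑ k ∈ s, g k) ^ p := by
        gcongr; exact Real.self_le_rpow_of_one_le hcard hp
    _ = (#s * ∑ k ∈ s, g k) ^ p := (Real.mul_rpow (by positivity) hsum).symm

theorem Finset.sup'_le_sup'_of_sum_rpow_le {ι α : Type*} {l : Filter α} [l.NeBot] {p : α → ℝ}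
    (hp : Tendsto p l atTop) {s : Finset ι} (hs : s.Nonempty) {a b : α → ι → ℝ} {a' b' : ι → ℝ}
    (ha : ∀ i ∈ s, Tendsto (a · i) l (𝓝 (a' i))) (hb : ∀ i ∈ s, Tendsto (b · i) l (𝓝 (b' i)))
    (ha₀ : ∀ᶠ x in l, ∀ i ∈ s, 0 ≤ a x i) (hb₀ : ∀ᶠ x in l, ∀ i ∈ s, 0 ≤ b x i)
    (hab : ∀ᶠ x in l, ∑ i ∈ s, a x i ^ p x ≤ ∑ i ∈ s, b x i ^ p x) :
    s.sup' hs a' ≤ s.sup' hs b' := by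
  by_contra! hlt
  obtain ⟨i, hi, hmax⟩ := s.exists_mem_eq_sup' hs a'
  rw [hmax] at hlt
  set B := s.sup' hs b'
  have hB : 0 ≤ B := le_sup'_of_le b' hi <|
    ge_of_tendsto (hb i hi) (hb₀.mono fun x hx => hx i hi)
  set c := (a' i - B) / 3 with hc_def
  have hc : 0 < c := by rw [hc_def]; linarith
  have hbig : ∀ᶠ x in l, B + 2 * c < a x i := (ha i hi).eventually_const_lt (by linarith)
  have hsmall : ∀ᶠ x in l, ∀ j ∈ s, b x j < B + c := s.eventually_all.2 fun j hj =>
    (hb j hj).eventually_lt_const (by linarith [le_sup' b' hj])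
  have hgrowth : ∀ᶠ x in l, #s * (B + c) ^ p x < (B + 2 * c) ^ p x :=
    hp.eventually (eventually_mul_rpow_lt_rpow (by linarith) (by linarith) _)
  obtain ⟨x, ha₀x, hb₀x, habx, hbigx, hsmallx, hgrowthx, hpx⟩ :=
    (ha₀.and <| hb₀.and <| hab.and <| hbig.and <| hsmall.and <| hgrowth.and <|
      hp.eventually_gt_atTop 0).exists
  have := calc (B + 2 * c) ^ p x < a x i ^ p x := Real.rpow_lt_rpow (by linarith) hbigx hpx
    _ ≤ ∑ j ∈ s, a x j ^ p x := single_le_sum (fun j hj => Real.rpow_nonneg (ha₀x j hj) _) hi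
    _ ≤ ∑ j ∈ s, b x j ^ p x := habx
    _ ≤ ∑ _j ∈ s, (B + c) ^ p x :=
        sum_le_sum fun j hj => Real.rpow_le_rpow (hb₀x j hj) (hsmallx j hj).le hpx.le
    _ = #s * (B + c) ^ p x := by rw [sum_const, nsmul_eq_mul]
  linarith

theorem List.lex_lt_of_coe_eq_add {α : Type*} [LinearOrder α] {τ : α} :
    ∀ {l₁ l₂ : List α} {C R₁ R₂ : Multiset α}, l₁.Pairwise (· ≥ ·) → l₂.Pairwise (· ≥ ·) →
      (l₁ : Multiset α) = C + R₁ → (l₂ : Multiset α) = C + R₂ →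
      (∀ x ∈ R₁, x < τ) → τ ∈ R₂ → List.Lex (· < ·) l₁ l₂
  | l₁, l₂, C, R₁, R₂, hs₁, hs₂, h₁, h₂, hR₁, hτ => by
    have hτl₂ : τ ∈ l₂ := Multiset.mem_coe.1 (h₂ ▸ Multiset.mem_add.2 (.inr hτ))
    obtain _ | ⟨b, l₂⟩ := l₂
    · simp at hτl₂
    obtain _ | ⟨a, l₁⟩ := l₁
    · exact .nil
    have hτb : τ ≤ b := by
      rcases List.mem_cons.1 hτl₂ with rfl | h
      · rfl
      · exact List.rel_of_pairwise_cons hs₂ h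
    rcases Multiset.mem_add.1 (h₁ ▸ Multiset.mem_coe.2 List.mem_cons_self : a ∈ C + R₁)
      with haC | haR
    · have hab : a ≤ b := by
        rcases List.mem_cons.1 (Multiset.mem_coe.1 (h₂ ▸ Multiset.mem_add.2 (.inl haC)))
          with rfl | h
        · rfl
        · exact List.rel_of_pairwise_cons hs₂ h
      rcases hab.lt_or_eq with hlt | rfl
      · exact .rel hlt
      have tail (l : List α) (R : Multiset α) (h : ((a :: l : List α) : Multiset α) = C + R) :
          (l : Multiset α) = C.erase a + R := by
        rw [← Multiset.cons_coe, ← Multiset.cons_erase haC, Multiset.cons_add] at h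
        exact Multiset.cons_inj_right a |>.1 h
      exact .cons (List.lex_lt_of_coe_eq_add hs₁.of_cons hs₂.of_cons (tail _ _ h₁) (tail _ _ h₂)
        hR₁ hτ)
    · exact .rel ((hR₁ a haR).trans_le hτb)

section absGrad

variable {V : Type*} {ℓ : Sym2 V → ℝ}

@[simp]
theorem absGrad_mk (v : V → ℝ) (x y : V) : absGrad ℓ v s(x, y) = |v x - v y| / ℓ s(x, y) := rfl

theorem absGrad_nonneg (v : V → ℝ) {e : Sym2 V} (he : 0 ≤ ℓ e) : 0 ≤ absGrad ℓ v e := by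
  induction e with
  | _ x y => exact div_nonneg (abs_nonneg _) he

theorem continuous_absGrad (ℓ : Sym2 V → ℝ) (e : Sym2 V) :
    Continuous fun v : V → ℝ => absGrad ℓ v e := by
  induction e with
  | _ x y => simp only [absGrad_mk]; fun_prop

theorem isDiag_map_sub_mk {v w : V → ℝ} {x y : V} :
    (s(x, y).map (v - w)).IsDiag ↔ v x - v y = w x - w y := by
  rw [Sym2.map_mk, Sym2.mk_isDiag_iff, Pi.sub_apply, Pi.sub_apply, sub_eq_sub_iff_sub_eq_sub]

theorem absGrad_sub_of_isDiag (v : V → ℝ) {d : V → ℝ} {e : Sym2 V} (h : (e.map d).IsDiag) :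
    absGrad ℓ (v - d) e = absGrad ℓ v e := by
  induction e with
  | _ x y =>
    rw [Sym2.map_mk, Sym2.mk_isDiag_iff] at h
    simp only [absGrad_mk, Pi.sub_apply, h, sub_sub_sub_cancel_right]

theorem absGrad_average_of_isDiag {v w : V → ℝ} {e : Sym2 V} (h : (e.map (v - w)).IsDiag) :
    absGrad ℓ (fun x => (v x + w x) / 2) e = absGrad ℓ w e := by
  induction e with
  | _ x y =>
    rw [isDiag_map_sub_mk] at h
    rw [absGrad_mk, absGrad_mk,
      show (v x + w x) / 2 - (v y + w y) / 2 = w x - w y by linarith]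

theorem abs_add_div_two_lt {a b c : ℝ} (ha : |a| ≤ c) (hb : |b| ≤ c) (hab : a ≠ b) :
    |(a + b) / 2| < c := by
  rw [abs_le] at ha hb
  rw [abs_lt]
  rcases hab.lt_or_gt with h | h <;> constructor <;> linarith

theorem absGrad_average_lt {v w : V → ℝ} {e : Sym2 V} (he : 0 < ℓ e)
    (hvw : ¬(e.map (v - w)).IsDiag) {τ : ℝ} (hv : absGrad ℓ v e ≤ τ) (hw : absGrad ℓ w e ≤ τ) :
    absGrad ℓ (fun x => (v x + w x) / 2) e < τ := by
  induction e with
  | _ x y =>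
    rw [isDiag_map_sub_mk] at hvw
    simp only [absGrad_mk, div_le_iff₀ he] at hv hw
    rw [absGrad_mk, div_lt_iff₀ he,
      show (v x + w x) / 2 - (v y + w y) / 2 = ((v x - v y) + (w x - w y)) / 2 by ring]
    exact abs_add_div_two_lt hv hw hvw

end absGrad

@[simp]
theorem walkLen_nil_s17 {V : Type*} {G : SimpleGraph V} (ℓ : Sym2 V → ℝ) (a : V) :
    walkLen ℓ (SimpleGraph.Walk.nil : G.Walk a a) = 0 := rfl

@[simp]
theorem walkLen_cons_s17 {V : Type*} {G : SimpleGraph V} (ℓ : Sym2 V → ℝ) {a b c : V}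
    (h : G.Adj a b) (q : G.Walk b c) : walkLen ℓ (.cons h q) = ℓ s(a, b) + walkLen ℓ q := by
  simp [walkLen]

namespace SimpleGraph

variable {V : Type*} {G : SimpleGraph V}

theorem Walk.abs_sub_le_mul_walkLen {ℓ : Sym2 V → ℝ} {f : V → ℝ} {C : ℝ}
    (h : ∀ x y, G.Adj x y → |f x - f y| ≤ C * ℓ s(x, y)) {a b : V} (q : G.Walk a b) :
    |f a - f b| ≤ C * walkLen ℓ q := by
  induction q with
  | nil => simp
  | @cons a b c hab q ih =>
    calc |f a - f c| ≤ |f a - f b| + |f b - f c| := abs_sub_le _ _ _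
      _ ≤ C * ℓ s(a, b) + C * walkLen ℓ q := add_le_add (h a b hab) ih
      _ = C * walkLen ℓ (.cons hab q) := by rw [walkLen_cons_s17, mul_add]

theorem Reachable.apply_eq_of_forall_adj {β : Type*} {f : V → β}
    (h : ∀ x y, G.Adj x y → f x = f y) {a b : V} (hab : G.Reachable a b) : f a = f b := by
  obtain ⟨q⟩ := hab
  induction q with
  | nil => rfl
  | cons hadj _ ih => exact (h _ _ hadj).trans ih

end SimpleGraph

section diffEdges

variable {V : Type*} [Fintype V] {G : SimpleGraph V} [DecidableRel G.Adj] {ℓ : Sym2 V → ℝ}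

/-- `(e.map (v - w)).IsDiag` says that `v - w` takes the same value at both ends of `e`, that is,
`v` and `w` have the same signed gradient on `e`. -/
noncomputable def diffEdges (G : SimpleGraph V) [DecidableRel G.Adj] (v w : V → ℝ) :
    Finset (Sym2 V) :=
  {e ∈ G.edgeFinset | ¬(e.map (v - w)).IsDiag}

theorem diffEdges_subset (v w : V → ℝ) : diffEdges G v w ⊆ G.edgeFinset := filter_subset _ _

theorem diffEdges_nonempty (hG : G.Connected) {v w : V → ℝ} {t : V} (ht : v t = w t)
    (hne : v ≠ w) : (diffEdges G v w).Nonempty := by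
  by_contra hD
  rw [not_nonempty_iff_eq_empty, diffEdges, filter_eq_empty_iff] at hD
  refine hne (funext fun x => ?_)
  have hconst : (v - w) t = (v - w) x := (hG.preconnected t x).apply_eq_of_forall_adj
    fun a b hab => by simpa using hD (G.mem_edgeFinset.2 hab : s(a, b) ∈ G.edgeFinset)
  simp only [Pi.sub_apply, ht, sub_self] at hconst
  linarith

theorem gradList_lex_lt [DecidableEq V] {v w : V → ℝ} {D : Finset (Sym2 V)} (hD : D ⊆ G.edgeFinset)
    (hoff : ∀ e ∈ G.edgeFinset \ D, absGrad ℓ v e = absGrad ℓ w e) {τ : ℝ}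
    (hv : ∀ e ∈ D, absGrad ℓ v e < τ) (hw : ∃ e ∈ D, absGrad ℓ w e = τ) :
    List.Lex (· < ·) (gradList G ℓ v) (gradList G ℓ w) := by
  have hsplit : G.edgeFinset.val = (G.edgeFinset \ D).val + D.val := by
    rw [sdiff_val, tsub_add_cancel_of_le (val_le_iff.2 hD)]
  obtain ⟨e, he, rfl⟩ := hw
  refine List.lex_lt_of_coe_eq_add (Multiset.pairwise_sort _ _) (Multiset.pairwise_sort _ _)
    (C := (G.edgeFinset \ D).val.map (absGrad ℓ w)) (R₁ := D.val.map (absGrad ℓ v))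
    (R₂ := D.val.map (absGrad ℓ w)) ?_ ?_ ?_ (Multiset.mem_map_of_mem _ he)
  · rw [gradList, Multiset.sort_eq, hsplit, Multiset.map_add,
      Multiset.map_congr rfl fun e he => hoff e he]
  · rw [gradList, Multiset.sort_eq, hsplit, Multiset.map_add]
  · simpa using hv

end diffEdges

section minimizers

variable {V : Type*} [Fintype V] {G : SimpleGraph V} [DecidableRel G.Adj]
  {ℓ : Sym2 V → ℝ} {T : Set V} {v₀ : V → ℝ} {vp : ℝ → V → ℝ}

theorem exists_isCompact_eventually_mem (hG : G.Connected) (hℓ : ∀ e ∈ G.edgeSet, 0 < ℓ e)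
    (hT : T.Nonempty) (hpext : ∀ p : ℝ, 1 < p → ∀ t ∈ T, vp p t = v₀ t)
    (hpmin : ∀ p : ℝ, 1 < p → ∀ w : V → ℝ, (∀ t ∈ T, w t = v₀ t) →
      ∑ e ∈ G.edgeFinset, absGrad ℓ (vp p) e ^ p ≤ ∑ e ∈ G.edgeFinset, absGrad ℓ w e ^ p)
    {z : V → ℝ} (hzT : ∀ t ∈ T, z t = v₀ t) :
    ∃ K : Set (V → ℝ), IsCompact K ∧ ∀ᶠ p in atTop, vp p ∈ K := by
  obtain ⟨t₀, ht₀⟩ := hT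
  set C := #G.edgeFinset * ∑ e ∈ G.edgeFinset, absGrad ℓ z e
  have q (x : V) : G.Walk t₀ x := (hG.preconnected t₀ x).some
  refine ⟨Set.univ.pi fun x => Set.Icc (v₀ t₀ - C * walkLen ℓ (q x)) (v₀ t₀ + C * walkLen ℓ (q x)),
    isCompact_univ_pi fun _ => isCompact_Icc, ?_⟩
  filter_upwards [eventually_gt_atTop 1] with p hp x _
  have hlip (a b : V) (hab : G.Adj a b) : |vp p a - vp p b| ≤ C * ℓ s(a, b) := by
    have hnonneg (u : V → ℝ) (e : Sym2 V) (he : e ∈ G.edgeFinset) : 0 ≤ absGrad ℓ u e :=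
      absGrad_nonneg u (hℓ e (G.mem_edgeFinset.1 he)).le
    have hgrad := le_card_mul_sum_of_sum_rpow_le (hnonneg _) (hnonneg _) hp.le
      (hpmin p hp z hzT) (G.mem_edgeFinset.2 hab : s(a, b) ∈ G.edgeFinset)
    rwa [absGrad_mk, div_le_iff₀ (hℓ _ hab)] at hgrad
  have hx := (q x).abs_sub_le_mul_walkLen hlip
  rw [hpext p hp t₀ ht₀, abs_sub_le_iff] at hx
  constructor <;> linarith

theorem sum_diffEdges_rpow_le_of_sum_rpow_le {v w z : V → ℝ} {p : ℝ}
    (h : ∑ e ∈ G.edgeFinset, absGrad ℓ v e ^ p ≤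
      ∑ e ∈ G.edgeFinset, absGrad ℓ (v - (w - z)) e ^ p) :
    ∑ e ∈ diffEdges G w z, absGrad ℓ v e ^ p ≤
      ∑ e ∈ diffEdges G w z, absGrad ℓ (v - (w - z)) e ^ p := by
  have hsplit (u : V → ℝ) : ∑ e ∈ G.edgeFinset, absGrad ℓ u e ^ p =
      ∑ e ∈ diffEdges G w z, absGrad ℓ u e ^ p +
        ∑ e ∈ G.edgeFinset with (e.map (w - z)).IsDiag, absGrad ℓ u e ^ p :=
    (sum_filter_not_add_sum_filter _ _ _).symm
  have hagree : ∑ e ∈ G.edgeFinset with (e.map (w - z)).IsDiag, absGrad ℓ (v - (w - z)) e ^ p =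
      ∑ e ∈ G.edgeFinset with (e.map (w - z)).IsDiag, absGrad ℓ v e ^ p :=
    sum_congr rfl fun e he => by rw [absGrad_sub_of_isDiag _ (mem_filter.1 he).2]
  rw [hsplit, hsplit, hagree] at h
  linarith

theorem sup'_absGrad_le_of_mapClusterPt (hℓ : ∀ e ∈ G.edgeSet, 0 < ℓ e)
    (hpext : ∀ p : ℝ, 1 < p → ∀ t ∈ T, vp p t = v₀ t)
    (hpmin : ∀ p : ℝ, 1 < p → ∀ w : V → ℝ, (∀ t ∈ T, w t = v₀ t) →
      ∑ e ∈ G.edgeFinset, absGrad ℓ (vp p) e ^ p ≤ ∑ e ∈ G.edgeFinset, absGrad ℓ w e ^ p)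
    {w z : V → ℝ} (hw : MapClusterPt w atTop vp) (hwT : ∀ t ∈ T, w t = v₀ t)
    (hzT : ∀ t ∈ T, z t = v₀ t) (hD : (diffEdges G w z).Nonempty) :
    (diffEdges G w z).sup' hD (absGrad ℓ w) ≤ (diffEdges G w z).sup' hD (absGrad ℓ z) := by
  set l := comap vp (𝓝 w) ⊓ atTop
  have : l.NeBot := by rwa [← map_neBot_iff vp, Filter.push_pull']
  have hvp : Tendsto vp l (𝓝 w) := tendsto_comap.mono_left inf_le_left
  have hid : Tendsto id l atTop := tendsto_id.mono_left inf_le_right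
  have hnonneg (u : ℝ → V → ℝ) : ∀ᶠ p in l, ∀ e ∈ diffEdges G w z, 0 ≤ absGrad ℓ (u p) e :=
    .of_forall fun p e he =>
      absGrad_nonneg (u p) (hℓ e (G.mem_edgeFinset.1 (diffEdges_subset w z he))).le
  have ha (e : Sym2 V) : Tendsto (fun p => absGrad ℓ (vp p) e) l (𝓝 (absGrad ℓ w e)) :=
    ((continuous_absGrad ℓ e).tendsto w).comp hvp
  have hb (e : Sym2 V) :
      Tendsto (fun p => absGrad ℓ (vp p - (w - z)) e) l (𝓝 (absGrad ℓ z e)) := by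
    have := ((continuous_absGrad ℓ e).tendsto _).comp (hvp.sub_const (w - z))
    rwa [sub_sub_cancel] at this
  -- `vp p - (w - z)` is an admissible competitor with the same gradients as `vp p` off `diffEdges`.
  have hab : ∀ᶠ p in l, ∑ e ∈ diffEdges G w z, absGrad ℓ (vp p) e ^ p ≤
      ∑ e ∈ diffEdges G w z, absGrad ℓ (vp p - (w - z)) e ^ p :=
    (hid.eventually (eventually_gt_atTop 1)).mono fun p hp =>
      sum_diffEdges_rpow_le_of_sum_rpow_le <|
        hpmin p hp _ fun t ht => by simp [hpext p hp t ht, hwT t ht, hzT t ht]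
  exact sup'_le_sup'_of_sum_rpow_le hid hD (fun e _ => ha e) (fun e _ => hb e)
    (hnonneg vp) (hnonneg fun p => vp p - (w - z)) hab

theorem sup'_absGrad_lt_of_lex_min [DecidableEq V] (hℓ : ∀ e ∈ G.edgeSet, 0 < ℓ e)
    {vlex : V → ℝ} (hlexext : ∀ t ∈ T, vlex t = v₀ t)
    (hlex : ∀ w : V → ℝ, (∀ t ∈ T, w t = v₀ t) → w ≠ vlex →
      List.Lex (· < ·) (gradList G ℓ vlex) (gradList G ℓ w))
    {w : V → ℝ} (hwT : ∀ t ∈ T, w t = v₀ t) (hD : (diffEdges G w vlex).Nonempty) :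
    (diffEdges G w vlex).sup' hD (absGrad ℓ vlex) < (diffEdges G w vlex).sup' hD (absGrad ℓ w) := by
  set D := diffEdges G w vlex
  obtain ⟨e₀, he₀, hτ⟩ := D.exists_mem_eq_sup' hD (absGrad ℓ vlex)
  by_contra! hle
  set m : V → ℝ := fun x => (w x + vlex x) / 2
  have hmT (t : V) (ht : t ∈ T) : m t = v₀ t := by simp [m, hwT t ht, hlexext t ht]
  have hm : List.Lex (· < ·) (gradList G ℓ m) (gradList G ℓ vlex) := by
    refine gradList_lex_lt (diffEdges_subset w vlex) (fun e he => ?_) (fun e he => ?_)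
      ⟨e₀, he₀, hτ.symm⟩
    · obtain ⟨he, hdiag⟩ := mem_sdiff.1 he
      exact absGrad_average_of_isDiag (by simpa [D, diffEdges, he] using hdiag)
    · exact absGrad_average_lt (hℓ e (G.mem_edgeFinset.1 (diffEdges_subset w vlex he)))
        (mem_filter.1 he).2 ((sup'_le_iff _ _).1 hle e he) (le_sup' _ he)
  by_cases hmv : m = vlex
  · exact List.lex_irrefl (fun x => lt_irrefl x) _ (hmv ▸ hm)
  · exact List.lex_asymm (fun h h' => lt_asymm h h') (hlex m hmT hmv) hm

theorem eq_lex_min_of_mapClusterPt [DecidableEq V] (hG : G.Connected) (hℓ : ∀ e ∈ G.edgeSet, 0 < ℓ e)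
    (hT : T.Nonempty) (hpext : ∀ p : ℝ, 1 < p → ∀ t ∈ T, vp p t = v₀ t)
    (hpmin : ∀ p : ℝ, 1 < p → ∀ w : V → ℝ, (∀ t ∈ T, w t = v₀ t) →
      ∑ e ∈ G.edgeFinset, absGrad ℓ (vp p) e ^ p ≤ ∑ e ∈ G.edgeFinset, absGrad ℓ w e ^ p)
    {vlex : V → ℝ} (hlexext : ∀ t ∈ T, vlex t = v₀ t)
    (hlex : ∀ w : V → ℝ, (∀ t ∈ T, w t = v₀ t) → w ≠ vlex →
      List.Lex (· < ·) (gradList G ℓ vlex) (gradList G ℓ w))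
    {w : V → ℝ} (hw : MapClusterPt w atTop vp) : w = vlex := by
  have hwT (t : V) (ht : t ∈ T) : w t = v₀ t :=
    (isClosed_eq (continuous_apply t) continuous_const).mem_of_mapClusterPt
      (s := {u : V → ℝ | u t = v₀ t}) hw ((eventually_gt_atTop 1).mono fun p hp => hpext p hp t ht)
  by_contra hne
  obtain ⟨t₀, ht₀⟩ := hT
  have hD := diffEdges_nonempty hG ((hwT t₀ ht₀).trans (hlexext t₀ ht₀).symm) hne
  exact (sup'_absGrad_le_of_mapClusterPt hℓ hpext hpmin hw hwT hlexext hD).not_gt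
    (sup'_absGrad_lt_of_lex_min hℓ hlexext hlex hwT hD)

end minimizers

/-- The `ℓ_p`-minimizing extensions converge pointwise, as `p → ∞`, to the
lex-minimizer. -/
theorem lp_minimizers_tendsto_lex_min {V : Type*} [Fintype V] [DecidableEq V]
    (G : SimpleGraph V) [DecidableRel G.Adj] (hG : G.Connected)
    (ℓ : Sym2 V → ℝ) (hℓ : ∀ e ∈ G.edgeSet, 0 < ℓ e)
    (T : Set V) (hT : T.Nonempty) (v₀ : V → ℝ)
    (vp : ℝ → V → ℝ)
    (hpext : ∀ p : ℝ, 1 < p → ∀ t ∈ T, vp p t = v₀ t)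
    (hpmin : ∀ p : ℝ, 1 < p → ∀ w : V → ℝ, (∀ t ∈ T, w t = v₀ t) →
      ∑ e ∈ G.edgeFinset, absGrad ℓ (vp p) e ^ p ≤
        ∑ e ∈ G.edgeFinset, absGrad ℓ w e ^ p)
    (vlex : V → ℝ) (hlexext : ∀ t ∈ T, vlex t = v₀ t)
    (hlex : ∀ w : V → ℝ, (∀ t ∈ T, w t = v₀ t) → w ≠ vlex →
      List.Lex (· < ·) (gradList G ℓ vlex) (gradList G ℓ w)) :
    ∀ x : V, Filter.Tendsto (fun p : ℝ => vp p x) Filter.atTop (nhds (vlex x)) := by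
  obtain ⟨K, hK, hvpK⟩ := exists_isCompact_eventually_mem hG hℓ hT hpext hpmin hlexext
  exact tendsto_pi_nhds.1 <| hK.tendsto_nhds_of_unique_mapClusterPt hvpK fun w _ hw =>
    eq_lex_min_of_mapClusterPt hG hℓ hT hpext hpmin hlexext hlex hw
end
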